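/- arXiv:1804.02676 — 8 statements merged into one kernel-verified Lean document; each statement's English description precedes it below -/
import Mathlib

section
/- Let D=(V,E) be a finite directed acyclic graph; call a vertex a source if it has no incoming edge and a sink if it has no outgoing edge. Let b : V → {0,1} satisfy b(v)=1 for every source and b(v)=0 for every sink. Let F be a set of unordered pairs of vertices, each pair consisting of one source and one sink, such that every source belongs to at least one pair of F. Let G be the undirected graph on V whose edges are {{u,v} : (u,v) ∈ E} ∪ F. Let t : V → {1,…,|V|} be injective with t(u) > t(v) for every directed edge (u,v) ∈ E. Define f : V → ℝ by f(v) = t(v) + 2|V| if b(v)=0 and f(v) = t(v) if b(v)=1. Then a vertex v is a local maximum of f with respect to G if and only if b(v)=0 and b(u)=1 for every u with (u,v) ∈ E. -/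
theorem stmt_1 {V : Type*} [Fintype V]
    -- `E` is the edge relation of a finite directed acyclic graph `D = (V, E)`
    -- (acyclicity is witnessed by the topological numbering `t` below).
    (E : V → V → Prop)
    -- `b : V → {0,1}` (here `true` stands for `1` and `false` for `0`),
    -- with every source true and every sink false:
    (b : V → Bool)
    (hb_source : ∀ v, (∀ u, ¬ E u v) → b v = true)
    (hb_sink : ∀ v, (∀ u, ¬ E v u) → b v = false)
    -- `F` is a set of unordered pairs, each consisting of one source and one sink:
    (F : Set (Sym2 V))
    (hF : ∀ p ∈ F, ∃ u v, p = s(u, v) ∧ (∀ w, ¬ E w u) ∧ (∀ w, ¬ E v w))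
    -- every source belongs to at least one pair of `F`:
    (hF_cover : ∀ u, (∀ w, ¬ E w u) → ∃ p ∈ F, u ∈ p)
    -- `Adj` is the adjacency of the undirected graph `G` with edges
    -- `{{u,v} : (u,v) ∈ E} ∪ F`:
    (Adj : V → V → Prop)
    (hAdj : ∀ u v, Adj u v ↔ E u v ∨ E v u ∨ s(u, v) ∈ F)
    -- `t : V → {1,…,|V|}` is an injective topological numbering:
    (t : V → ℕ) (ht_inj : Function.Injective t)
    (ht_range : ∀ v, t v ∈ Finset.Icc 1 (Fintype.card V))
    (ht_topo : ∀ u v, E u v → t v < t u)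
    -- `f(v) = t(v) + 2|V|` if `b(v) = 0`, and `f(v) = t(v)` if `b(v) = 1`:
    (f : V → ℝ)
    (hf : ∀ v, f v = (t v : ℝ) + if b v = false then 2 * (Fintype.card V : ℝ) else 0) :
    -- `v` is a local maximum of `f` w.r.t. `G` iff `b(v) = 0` and all predecessors of
    -- `v` are true:
    ∀ v, (∀ u, Adj v u → f u ≤ f v) ↔ (b v = false ∧ ∀ u, E u v → b u = true) := by
  intro v
  have hn : ∀ w : V, 1 ≤ t w ∧ t w ≤ Fintype.card V := fun w => Finset.mem_Icc.mp (ht_range w)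
  have hcard : 1 ≤ Fintype.card V := Fintype.card_pos_iff.mpr ⟨v⟩
  have hcardR : (1:ℝ) ≤ (Fintype.card V : ℝ) := by exact_mod_cast hcard
  have htR : ∀ w : V, (1:ℝ) ≤ (t w : ℝ) ∧ (t w : ℝ) ≤ (Fintype.card V : ℝ) := by
    intro w; exact ⟨by exact_mod_cast (hn w).1, by exact_mod_cast (hn w).2⟩
  constructor
  · intro hmax
    have hbv : b v = false := by
      by_contra h
      have hbv : b v = true := by
        cases hb : b v with
        | false => exact absurd hb h
        | true => rfl
      by_cases hsrc : ∀ u, ¬ E u v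
      · obtain ⟨p, hpF, hvp⟩ := hF_cover v hsrc
        obtain ⟨a, c, hpe, ha, hc⟩ := hF p hpF
        subst hpe
        rcases Sym2.mem_iff.mp hvp with rfl | rfl
        · have hadj : Adj v c := (hAdj v c).mpr (Or.inr (Or.inr hpF))
          have hle := hmax c hadj
          have hbc : b c = false := hb_sink c hc
          rw [hf, hf, hbv, hbc] at hle
          simp only [if_pos rfl] at hle
          have := (htR c).1
          have := (htR v).2
          simp at hle
          linarith
        · have := hb_sink v hc
          rw [hbv] at this
          exact Bool.noConfusion this
      · push_neg at hsrc
        obtain ⟨u, hu⟩ := hsrc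
        have hadj : Adj v u := (hAdj v u).mpr (Or.inr (Or.inl hu))
        have hle := hmax u hadj
        rw [hf, hf, hbv] at hle
        norm_num at hle
        have htlt : (t v : ℝ) < (t u : ℝ) := by exact_mod_cast ht_topo u v hu
        by_cases hbu : b u = false
        · rw [if_pos hbu] at hle
          have := (htR u).1
          have := (htR v).2
          linarith
        · rw [if_neg hbu] at hle
          linarith
    refine ⟨hbv, fun u huv => ?_⟩
    by_contra h
    have hbu : b u = false := by
      cases hb : b u with
      | false => rfl
      | true => exact absurd hb h
    have hadj : Adj v u := (hAdj v u).mpr (Or.inr (Or.inl huv))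
    have hle := hmax u hadj
    rw [hf, hf, hbv, hbu] at hle
    norm_num at hle
    exact absurd hle (not_le.mpr (ht_topo u v huv))
  · rintro ⟨hbv, hpred⟩ u hadj
    rcases (hAdj v u).mp hadj with hvu | huv | hpF
    · have htlt : (t u : ℝ) < (t v : ℝ) := by exact_mod_cast ht_topo v u hvu
      rw [hf, hf, hbv]
      norm_num
      by_cases hbu : b u = false
      · rw [if_pos hbu]; linarith
      · rw [if_neg hbu]; norm_num; linarith [hcardR]
    · have hbu := hpred u huv
      rw [hf, hf, hbv, hbu]
      norm_num
      have := (htR u).2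
      have := (htR v).1
      linarith
    · obtain ⟨a, c, hpe, ha, hc⟩ := hF _ hpF
      have : v = a ∧ u = c ∨ v = c ∧ u = a := by
        have := Sym2.eq_iff.mp hpe
        tauto
      rcases this with ⟨rfl, rfl⟩ | ⟨rfl, rfl⟩
      · have := hb_source v ha
        rw [hbv] at this
        exact Bool.noConfusion this
      · have hbu : b u = true := hb_source u ha
        rw [hf, hf, hbv, hbu]
        norm_num
        have := (htR u).2
        have := (htR v).1
        linarith
end

section
/- Let G=(V,E) be a finite connected graph, let W ≥ 1 be an integer, let f_A : V → {1,…,W}, let S ⊆ V be nonempty, and fix v* ∈ S. Define f_B : V → ℝ by f_B(v) = 0 if v ∈ S and f_B(v) = −d(v,v*)·(W+1) if v ∉ S, where d denotes the graph distance in G. Then a vertex v is a local maximum of f_A + f_B with respect to G if and only if v is a valid local maximum of (f_A,S) in G. -/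
/-- `v` is a local maximum of `f` in `G`: `f v ≥ f u` for every neighbor `u` of `v`. -/
def IsGraphLocalMax {α : Type*} (G : SimpleGraph α) (f : α → ℝ) (v : α) : Prop :=
  ∀ u, G.Adj v u → f u ≤ f v

/-- `v` is a valid local maximum of `(f, S)` in `G`: `v ∈ S` and `f v ≥ f w` for every
neighbor `w` of `v` lying in `S`. -/
def IsValidLocalMax {α : Type*} (G : SimpleGraph α) (f : α → ℝ) (S : Set α) (v : α) : Prop :=
  v ∈ S ∧ ∀ w, G.Adj v w → w ∈ S → f w ≤ f v

lemma exists_adj_dist_pred {V : Type*} (G : SimpleGraph V) (hconn : G.Connected)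
    (v vstar : V) (n : ℕ) (h : G.dist v vstar = n + 1) :
    ∃ u, G.Adj v u ∧ G.dist u vstar = n := by
  obtain ⟨p, hp⟩ := hconn.exists_walk_length_eq_dist v vstar
  rw [h] at hp
  cases p with
  | nil => simp at hp
  | @cons _ b _ hadj q =>
    refine ⟨b, hadj, le_antisymm ?_ ?_⟩
    · have := SimpleGraph.dist_le q
      simp [SimpleGraph.Walk.length_cons] at hp
      omega
    · have htri := hconn.dist_triangle (u := v) (v := b) (w := vstar)
      have h1 : G.dist v b = 1 := (SimpleGraph.dist_eq_one_iff_adj).mpr hadj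
      omega

theorem stmt_2 {V : Type*} [Fintype V] (G : SimpleGraph V) (hconn : G.Connected)
    (W : ℕ) (hW : 1 ≤ W)
    (fA : V → ℕ) (hfA : ∀ v, fA v ∈ Finset.Icc 1 W)
    (S : Set V) [DecidablePred (· ∈ S)] (hS : S.Nonempty)
    (vstar : V) (hvstar : vstar ∈ S)
    (fB : V → ℝ)
    (hfB : ∀ v, fB v = if v ∈ S then 0 else -((G.dist v vstar : ℝ) * ((W : ℝ) + 1))) :
    ∀ v, IsGraphLocalMax G (fun u => (fA u : ℝ) + fB u) v ↔
      IsValidLocalMax G (fun u => (fA u : ℝ)) S v := by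
  intro v
  have hfA1 : ∀ u, 1 ≤ fA u := fun u => (Finset.mem_Icc.mp (hfA u)).1
  have hfAW : ∀ u, fA u ≤ W := fun u => (Finset.mem_Icc.mp (hfA u)).2
  constructor
  · intro hmax
    have hvS : v ∈ S := by
      by_contra hvS
      have hne : v ≠ vstar := fun h => hvS (h ▸ hvstar)
      have hd : 0 < G.dist v vstar := hconn.pos_dist_of_ne hne
      obtain ⟨n, hn⟩ : ∃ n, G.dist v vstar = n + 1 := ⟨G.dist v vstar - 1, by omega⟩
      obtain ⟨u, hadj, hu⟩ := exists_adj_dist_pred G hconn v vstar n hn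
      have := hmax u hadj
      simp only [hfB, if_neg hvS, hn] at this
      have hAv : (fA v : ℝ) ≤ W := by exact_mod_cast hfAW v
      have hAu : (1 : ℝ) ≤ fA u := by exact_mod_cast hfA1 u
      by_cases huS : u ∈ S
      · simp only [if_pos huS] at this
        push_cast at this
        nlinarith [Nat.cast_nonneg (α := ℝ) n]
      · simp only [if_neg huS, hu] at this
        push_cast at this
        nlinarith
    refine ⟨hvS, fun w hadj hwS => ?_⟩
    have := hmax w hadj
    simpa [hfB, if_pos hvS, if_pos hwS] using this
  · rintro ⟨hvS, hval⟩ u hadj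
    simp only [hfB, if_pos hvS]
    by_cases huS : u ∈ S
    · simpa [if_pos huS] using hval u hadj huS
    · simp only [if_neg huS]
      have hne : u ≠ vstar := fun h => huS (h ▸ hvstar)
      have hd : 1 ≤ G.dist u vstar := hconn.pos_dist_of_ne hne
      have hAv : (1 : ℝ) ≤ fA v := by exact_mod_cast hfA1 v
      have hAu : (fA u : ℝ) ≤ W := by exact_mod_cast hfAW u
      have hd' : (1 : ℝ) ≤ G.dist u vstar := by exact_mod_cast hd
      nlinarith
end

section
/- For every n ≥ 1 there exists a VIED embedding of the hypercube graph Hyp_n into the odd graph Odd_{n+2}. -/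
open SimpleGraph

/-- A vertex-isolated edge-disjoint (VIED) embedding of a graph `G` into a graph `H`. -/
structure VIEDEmbedding {α β : Type*} (G : SimpleGraph α) (H : SimpleGraph β) where
  toFun : α → β
  inj : Function.Injective toFun
  path : ∀ ⦃v w : α⦄, G.Adj v w → H.Walk (toFun v) (toFun w)
  path_isPath : ∀ ⦃v w : α⦄ (h : G.Adj v w), (path h).IsPath
  path_symm : ∀ ⦃v w : α⦄ (h : G.Adj v w), path h.symm = (path h).reverse
  interior_disjoint : ∀ ⦃v w v' w' : α⦄ (h : G.Adj v w) (h' : G.Adj v' w'),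
    s(v, w) ≠ s(v', w') → ∀ x : β,
      x ∈ (path h).support.tail.dropLast → x ∉ (path h').support.tail.dropLast
  vertex_isolated : ∀ ⦃v w w' : α⦄ (h : G.Adj w w'), v ≠ w → v ≠ w' →
    ∀ x ∈ (path h).support, 2 ≤ H.dist (toFun v) x

/-- The hypercube graph `Hyp_n` on `{0,1}ⁿ`: two vertices are adjacent iff they differ
in exactly one coordinate. -/
def hypercube (n : ℕ) : SimpleGraph (Fin n → Bool) :=
  SimpleGraph.fromRel (fun x y => hammingDist x y = 1)

/-- The odd (Kneser) graph `Odd_k`: vertices are the `(k-1)`-element subsets of a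
`(2k-1)`-element set, two subsets being adjacent iff they are disjoint. -/
def oddGraph (k : ℕ) : SimpleGraph {s : Finset (Fin (2 * k - 1)) // s.card = k - 1} :=
  SimpleGraph.fromRel (fun s t => Disjoint s.1 t.1)


section VIEDAux
open Finset

variable {n : ℕ}


variable {n : ℕ}

abbrev Tn (n : ℕ) := (Fin n × Bool) ⊕ Fin 3

lemma tcard (n : ℕ) : Fintype.card (Tn n) = 2 * (n + 2) - 1 := by
  simp [Tn]; omega

noncomputable def En (n : ℕ) : Tn n ≃ Fin (2 * (n + 2) - 1) :=
  Fintype.equivFinOfCardEq (tcard n)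

def An (n : ℕ) (x : Fin n → Bool) : Finset (Tn n) :=
  (Finset.univ.image fun i => Sum.inl (i, x i)) ∪ {Sum.inr 0}

@[simp] lemma inl_mem_A {x : Fin n → Bool} {i : Fin n} {b : Bool} :
    Sum.inl (i, b) ∈ An n x ↔ b = x i := by
  simp [An]; exact eq_comm

@[simp] lemma inr_mem_A {x : Fin n → Bool} {c : Fin 3} :
    Sum.inr c ∈ An n x ↔ c = 0 := by simp [An]

lemma card_A (x : Fin n → Bool) : (An n x).card = n + 1 := by
  rw [An, card_union_of_disjoint (by simp [Finset.disjoint_left])]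
  rw [Finset.card_image_of_injective _ (fun a b hab => by simp at hab; exact hab.1)]
  simp

lemma A_inj : Function.Injective (An n) := by
  intro x y h
  funext i
  have : Sum.inl (i, x i) ∈ An n y := by rw [← h]; simp
  simpa using this

def Mn (n : ℕ) (x y : Fin n → Bool) : Finset (Tn n) := (An n x ∪ An n y)ᶜ

lemma M_comm (x y : Fin n → Bool) : Mn n x y = Mn n y x := by
  rw [Mn, Mn, union_comm]

@[simp] lemma mem_M {x y : Fin n → Bool} {t : Tn n} :
    t ∈ Mn n x y ↔ t ∉ An n x ∧ t ∉ An n y := by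
  simp [Mn, not_or]

variable {n : ℕ}

lemma hyp_adj {x y : Fin n → Bool} (h : (hypercube n).Adj x y) :
    ∃ i, x i ≠ y i ∧ ∀ j, j ≠ i → x j = y j := by
  rw [hypercube, fromRel_adj] at h
  have h1 : hammingDist x y = 1 := by
    rcases h.2 with h' | h'
    · exact h'
    · rwa [hammingDist_comm]
  rw [hammingDist, Finset.card_eq_one] at h1
  obtain ⟨i, hi⟩ := h1
  refine ⟨i, ?_, ?_⟩
  · have : i ∈ ({i} : Finset (Fin n)) := Finset.mem_singleton_self i
    rw [← hi] at this
    simpa using this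
  · intro j hj
    by_contra hc
    have : j ∈ ({i} : Finset (Fin n)) := by rw [← hi]; simpa using hc
    exact hj (Finset.mem_singleton.mp this)

lemma bool_tri : ∀ (p q b : Bool), p ≠ q → b = p ∨ b = q := by decide

lemma bool_tri' : ∀ (p q b : Bool), p ≠ q → b ≠ p → b = q := by decide

lemma union_eq {x y : Fin n → Bool} {i : Fin n} (hi : x i ≠ y i)
    (hoff : ∀ j, j ≠ i → x j = y j) :
    An n x ∪ An n y = insert (Sum.inl (i, y i)) (An n x) := by
  ext t
  rcases t with ⟨j, b⟩ | c
  · by_cases hj : j = i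
    · subst hj
      simp only [Finset.mem_union, inl_mem_A, Finset.mem_insert, Sum.inl.injEq,
        Prod.mk.injEq, true_and]
      tauto
    · have hxy := hoff j hj
      simp only [Finset.mem_union, inl_mem_A, Finset.mem_insert, Sum.inl.injEq,
        Prod.mk.injEq, hxy, hj, false_and, false_or]
      tauto
  · simp

lemma card_M {x y : Fin n → Bool} {i : Fin n} (hi : x i ≠ y i)
    (hoff : ∀ j, j ≠ i → x j = y j) : (Mn n x y).card = n + 1 := by
  rw [Mn, Finset.card_compl, union_eq hi hoff,
    Finset.card_insert_of_notMem (by simp; exact fun h => hi h.symm), card_A, tcard]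
  omega

lemma M_inj {x y x' y' : Fin n → Bool} {i i' : Fin n}
    (hi : x i ≠ y i) (hoff : ∀ j, j ≠ i → x j = y j)
    (hi' : x' i' ≠ y' i') (hoff' : ∀ j, j ≠ i' → x' j = y' j)
    (hM : Mn n x y = Mn n x' y') :
    (x = x' ∧ y = y') ∨ (x = y' ∧ y = x') := by
  have hU : An n x ∪ An n y = An n x' ∪ An n y' := by
    have := hM
    rw [Mn, Mn] at this
    exact compl_inj_iff.mp this
  have key : ∀ (j : Fin n) (b : Bool), (b = x j ∨ b = y j) ↔ (b = x' j ∨ b = y' j) := by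
    intro j b
    have := Finset.ext_iff.mp hU (Sum.inl (j, b))
    simpa using this
  have hii : i = i' := by
    by_contra hne
    have hx : x i' = y i' := hoff i' (fun hh => hne hh.symm)
    have h1 := (key i' (x' i')).mpr (Or.inl rfl)
    have h2 := (key i' (y' i')).mpr (Or.inr rfl)
    have e1 : x' i' = x i' := by rcases h1 with h | h; exact h; exact h.trans hx.symm
    have e2 : y' i' = x i' := by rcases h2 with h | h; exact h; exact h.trans hx.symm
    exact hi' (e1.trans e2.symm)
  subst hii
  have hxx' : ∀ j, j ≠ i → x' j = x j := by
    intro j hj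
    rcases (key j (x' j)).mpr (Or.inl rfl) with h | h
    · exact h
    · exact h.trans (hoff j hj).symm
  have hyy' : ∀ j, j ≠ i → y' j = x j := by
    intro j hj
    rcases (key j (y' j)).mpr (Or.inr rfl) with h | h
    · exact h
    · exact h.trans (hoff j hj).symm
  rcases bool_tri (x i) (y i) (x' i) hi with hxi | hxi
  · left
    have hx : x = x' := by
      funext j
      by_cases hj : j = i
      · subst hj; exact hxi.symm
      · exact (hxx' j hj).symm
    constructor
    · exact hx
    · funext j
      by_cases hj : j = i
      · subst hj
        have hne2 : y' j ≠ x j := fun hh => hi' (hxi.trans hh.symm)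
        exact (bool_tri' (x j) (y j) (y' j) hi hne2).symm
      · exact ((hyy' j hj).trans (hoff j hj)).symm
  · right
    have hx : x = y' := by
      funext j
      by_cases hj : j = i
      · subst hj
        have : y' j ≠ y j := by
          intro hh; exact hi' (hxi.trans hh.symm)
        have := bool_tri' (y j) (x j) (y' j) (Ne.symm hi) this
        exact this.symm
      · exact ((hyy' j hj).trans rfl).symm
    refine ⟨hx, ?_⟩
    funext j
    by_cases hj : j = i
    · subst hj; exact hxi.symm
    · exact ((hxx' j hj).trans (hoff j hj)).symm

lemma exists_j {v w w' : Fin n → Bool} {i : Fin n} (hi : w i ≠ w' i)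
    (hoff : ∀ j, j ≠ i → w j = w' j) (hv : v ≠ w) (hv' : v ≠ w') :
    ∃ j, j ≠ i ∧ v j ≠ w j := by
  by_contra hc
  push_neg at hc
  by_cases hvi : v i = w i
  · apply hv
    funext j
    by_cases hj : j = i
    · subst hj; exact hvi
    · exact hc j hj
  · apply hv'
    funext j
    by_cases hj : j = i
    · subst hj; exact bool_tri' (w j) (w' j) (v j) hi hvi
    · exact (hc j hj).trans (hoff j hj)

abbrev OV (n : ℕ) := {s : Finset (Fin (2 * (n + 2) - 1)) // s.card = (n + 2) - 1}

lemma odd_nonempty (s : OV n) : s.1.Nonempty := by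
  rw [← Finset.card_pos, s.2]; omega

lemma odd_adj_of {s t : OV n} (hd : Disjoint s.1 t.1) : (oddGraph (n + 2)).Adj s t := by
  rw [oddGraph, fromRel_adj]
  refine ⟨?_, Or.inl hd⟩
  intro h
  rw [h] at hd
  have := disjoint_self.mp hd
  have h2 := odd_nonempty t
  simp [this] at h2

lemma not_adj_of_common {s t : OV n} (x : Fin (2 * (n + 2) - 1)) (hx : x ∈ s.1)
    (hx' : x ∈ t.1) : ¬ (oddGraph (n + 2)).Adj s t := by
  rw [oddGraph, fromRel_adj]
  rintro ⟨hne, hd | hd⟩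
  · exact Finset.disjoint_left.mp hd hx hx'
  · exact Finset.disjoint_left.mp hd hx' hx

lemma odd_reach : ∀ (d : ℕ) (s t : OV n), (t.1 \ s.1).card ≤ d →
    (oddGraph (n + 2)).Reachable s t := by
  intro d
  induction d with
  | zero =>
    intro s t h
    have h0 : t.1 \ s.1 = ∅ := Finset.card_eq_zero.mp (Nat.le_zero.mp h)
    have hsub : t.1 ⊆ s.1 := Finset.sdiff_eq_empty_iff_subset.mp h0
    have : t = s := Subtype.ext (Finset.eq_of_subset_of_card_le hsub (by rw [s.2, t.2]))
    rw [this]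
  | succ d ih =>
    intro s t h
    by_cases h0 : t.1 \ s.1 = ∅
    · have hsub : t.1 ⊆ s.1 := Finset.sdiff_eq_empty_iff_subset.mp h0
      have : t = s := Subtype.ext (Finset.eq_of_subset_of_card_le hsub (by rw [s.2, t.2]))
      rw [this]
    · obtain ⟨b, hb⟩ := Finset.nonempty_iff_ne_empty.mpr h0
      have hcard : (s.1 \ t.1).card = (t.1 \ s.1).card :=
        Finset.card_sdiff_comm (by rw [s.2, t.2])
      have hst : (s.1 \ t.1).Nonempty := by
        rw [← Finset.card_pos, hcard, Finset.card_pos]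
        exact Finset.nonempty_iff_ne_empty.mpr h0
      obtain ⟨a, ha⟩ := hst
      rw [Finset.mem_sdiff] at ha hb
      have hbs : b ∉ s.1 := hb.2
      set s' : Finset (Fin (2 * (n + 2) - 1)) := insert b (s.1.erase a) with hs'
      have hcs' : s'.card = (n + 2) - 1 := by
        rw [hs', Finset.card_insert_of_notMem (fun hh => hbs (Finset.mem_of_mem_erase hh)),
          Finset.card_erase_of_mem ha.1, s.2]
        omega
      have huni : s.1 ∪ s' = insert b s.1 := by
        ext x
        simp only [hs', Finset.mem_union, Finset.mem_insert, Finset.mem_erase]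
        constructor
        · rintro (h | h | ⟨_, h⟩) <;> tauto
        · rintro (h | h)
          · tauto
          · by_cases hxa : x = a
            · left; rw [hxa]; exact ha.1
            · tauto
      set c : Finset (Fin (2 * (n + 2) - 1)) := (s.1 ∪ s')ᶜ with hc
      have hcc : c.card = (n + 2) - 1 := by
        rw [hc, Finset.card_compl, huni, Finset.card_insert_of_notMem hbs, s.2]
        simp
        omega
      have hd1 : Disjoint s.1 c := by
        rw [Finset.disjoint_left]
        intro x hx hxc
        rw [hc, Finset.mem_compl] at hxc
        exact hxc (Finset.mem_union_left _ hx)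
      have hd2 : Disjoint c s' := by
        rw [Finset.disjoint_right]
        intro x hx hxc
        rw [hc, Finset.mem_compl] at hxc
        exact hxc (Finset.mem_union_right _ hx)
      have r1 : (oddGraph (n + 2)).Reachable s ⟨s', hcs'⟩ :=
        ((odd_adj_of (s := s) (t := ⟨c, hcc⟩) hd1).reachable).trans
          ((odd_adj_of (s := ⟨c, hcc⟩) (t := ⟨s', hcs'⟩) hd2).reachable)
      refine r1.trans (ih ⟨s', hcs'⟩ t ?_)
      show (t.1 \ s').card ≤ d
      have hsub2 : t.1 \ s' ⊆ (t.1 \ s.1).erase b := by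
        intro x hx
        rw [Finset.mem_sdiff] at hx
        rw [Finset.mem_erase, Finset.mem_sdiff]
        have hxb : x ≠ b := fun hh => hx.2 (by rw [hh, hs']; exact Finset.mem_insert_self _ _)
        refine ⟨hxb, hx.1, ?_⟩
        intro hxs
        apply hx.2
        rw [hs']
        have hxa : x ≠ a := fun hh => ha.2 (hh ▸ hx.1)
        exact Finset.mem_insert_of_mem (Finset.mem_erase_of_ne_of_mem hxa hxs)
      have := Finset.card_le_card hsub2
      rw [Finset.card_erase_of_mem (Finset.mem_sdiff.mpr hb)] at this
      omega

lemma two_le_dist {s t : OV n} (hr : (oddGraph (n + 2)).Reachable s t) (hne : s ≠ t)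
    (hna : ¬ (oddGraph (n + 2)).Adj s t) : 2 ≤ (oddGraph (n + 2)).dist s t := by
  have h0 := hr.pos_dist_of_ne hne
  have h1 : (oddGraph (n + 2)).dist s t ≠ 1 := fun h => hna (dist_eq_one_iff_adj.mp h)
  omega
noncomputable def Fn (n : ℕ) (s : Finset (Tn n)) : Finset (Fin (2 * (n + 2) - 1)) :=
  s.map (En n).toEmbedding

@[simp] lemma card_F (s : Finset (Tn n)) : (Fn n s).card = s.card := Finset.card_map _

@[simp] lemma mem_F {s : Finset (Tn n)} {a : Tn n} : En n a ∈ Fn n s ↔ a ∈ s := by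
  simp [Fn]

lemma F_inj : Function.Injective (Fn n) := Finset.map_injective _

lemma F_disjoint {s t : Finset (Tn n)} (h : Disjoint s t) : Disjoint (Fn n s) (Fn n t) := by
  rw [Fn, Fn, Finset.disjoint_map]
  exact h

noncomputable def Phi (n : ℕ) (x : Fin n → Bool) : OV n :=
  ⟨Fn n (An n x), by simp only [card_F, card_A]; omega⟩

lemma Phi_inj : Function.Injective (Phi n) := by
  intro x y h
  exact A_inj (F_inj (congrArg Subtype.val h))

noncomputable def midV {x y : Fin n → Bool} (h : (hypercube n).Adj x y) : OV n :=
  ⟨Fn n (Mn n x y), by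
    obtain ⟨i, hi, hoff⟩ := hyp_adj h
    simp only [card_F, card_M hi hoff]
    omega⟩

lemma disj_A_M_left (x y : Fin n → Bool) : Disjoint (An n x) (Mn n x y) := by
  rw [Finset.disjoint_left]
  intro t ht htm
  rw [mem_M] at htm
  exact htm.1 ht

lemma disj_A_M_right (x y : Fin n → Bool) : Disjoint (An n y) (Mn n x y) := by
  rw [Finset.disjoint_left]
  intro t ht htm
  rw [mem_M] at htm
  exact htm.2 ht

lemma adj_Phi_mid {x y : Fin n → Bool} (h : (hypercube n).Adj x y) :
    (oddGraph (n + 2)).Adj (Phi n x) (midV h) :=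
  odd_adj_of (F_disjoint (disj_A_M_left x y))

lemma adj_mid_Phi {x y : Fin n → Bool} (h : (hypercube n).Adj x y) :
    (oddGraph (n + 2)).Adj (midV h) (Phi n y) :=
  (odd_adj_of (F_disjoint (disj_A_M_right x y))).symm

noncomputable def thePath {x y : Fin n → Bool} (h : (hypercube n).Adj x y) :
    (oddGraph (n + 2)).Walk (Phi n x) (Phi n y) :=
  SimpleGraph.Walk.cons (adj_Phi_mid h) (SimpleGraph.Walk.cons (adj_mid_Phi h) SimpleGraph.Walk.nil)

lemma walk2_congr {β : Type*} {H : SimpleGraph β} {a b c c' : β} (hc : c = c')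
    (h1 : H.Adj a c) (h2 : H.Adj c b) {h1' : H.Adj a c'} {h2' : H.Adj c' b} :
    SimpleGraph.Walk.cons h1 (SimpleGraph.Walk.cons h2 SimpleGraph.Walk.nil) =
      SimpleGraph.Walk.cons h1' (SimpleGraph.Walk.cons h2' SimpleGraph.Walk.nil) := by
  subst hc; rfl

lemma midV_symm {x y : Fin n → Bool} (h : (hypercube n).Adj x y) :
    midV h.symm = midV h := Subtype.ext (congrArg (Fn n) (M_comm y x))

lemma thePath_symm {x y : Fin n → Bool} (h : (hypercube n).Adj x y) :
    thePath h.symm = (thePath h).reverse := by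
  have hm : (midV h.symm : OV n) = midV h := midV_symm h
  exact walk2_congr hm (adj_Phi_mid h.symm) (adj_mid_Phi h.symm)

lemma support_thePath {x y : Fin n → Bool} (h : (hypercube n).Adj x y) :
    (thePath h).support = [Phi n x, midV h, Phi n y] := by
  simp [thePath]

lemma interior_thePath {x y : Fin n → Bool} (h : (hypercube n).Adj x y) :
    (thePath h).support.tail.dropLast = [midV h] := by
  rw [support_thePath]
  rfl

lemma Phi_ne_mid {v x y : Fin n → Bool} (h : (hypercube n).Adj x y) :
    Phi n v ≠ midV h := by
  intro he
  have hAM : An n v = Mn n x y := F_inj (congrArg Subtype.val he)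
  have h0 : Sum.inr 0 ∈ An n v := inr_mem_A.mpr rfl
  rw [hAM, mem_M] at h0
  exact h0.1 (inr_mem_A.mpr rfl)

lemma thePath_isPath {x y : Fin n → Bool} (h : (hypercube n).Adj x y) :
    (thePath h).IsPath := by
  rw [SimpleGraph.Walk.isPath_def, support_thePath]
  simp [List.nodup_cons]
  refine ⟨⟨Phi_ne_mid h, fun hh => h.ne (Phi_inj hh)⟩, ?_⟩
  exact fun hh => Phi_ne_mid h hh.symm


end VIEDAux

open Finset in
theorem stmt_5 (n : ℕ) (hn : 1 ≤ n) :
    Nonempty (VIEDEmbedding (hypercube n) (oddGraph (n + 2))) := by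
  refine ⟨{ toFun := Phi n, inj := Phi_inj,
            path := fun v w h => thePath h,
            path_isPath := fun v w h => thePath_isPath h,
            path_symm := fun v w h => thePath_symm h,
            interior_disjoint := ?_, vertex_isolated := ?_ }⟩
  · intro v w v' w' h h' hne x hx hx'
    rw [interior_thePath] at hx hx'
    simp only [List.mem_singleton] at hx hx'
    have hmm : midV h = midV h' := hx ▸ hx'.symm ▸ rfl
    have hMM : Mn n v w = Mn n v' w' := F_inj (congrArg Subtype.val hmm)
    obtain ⟨i, hi, hoff⟩ := hyp_adj h
    obtain ⟨i', hi', hoff'⟩ := hyp_adj h'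
    rcases M_inj hi hoff hi' hoff' hMM with ⟨h1, h2⟩ | ⟨h1, h2⟩
    · exact hne (by rw [h1, h2])
    · exact hne (by rw [h1, h2, Sym2.eq_swap])
  · intro v w w' h hvw hvw' x hx
    rw [support_thePath] at hx
    obtain ⟨i, hi, hoff⟩ := hyp_adj h
    obtain ⟨j, hj, hvj⟩ := exists_j hi hoff hvw hvw'
    simp only [List.mem_cons, List.mem_singleton, List.not_mem_nil, or_false] at hx
    have hreach : ∀ t : OV n, (oddGraph (n + 2)).Reachable (Phi n v) t :=
      fun t => odd_reach _ _ t le_rfl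
    rcases hx with rfl | rfl | rfl
    · refine two_le_dist (hreach _) (fun hh => hvw (Phi_inj hh)) ?_
      exact not_adj_of_common (En n (Sum.inr 0)) (mem_F.mpr (inr_mem_A.mpr rfl))
        (mem_F.mpr (inr_mem_A.mpr rfl))
    · refine two_le_dist (hreach _) (Phi_ne_mid h) ?_
      refine not_adj_of_common (En n (Sum.inl (j, v j))) (mem_F.mpr (inl_mem_A.mpr rfl)) ?_
      refine mem_F.mpr (mem_M.mpr ⟨?_, ?_⟩)
      · rw [inl_mem_A]; exact hvj
      · rw [inl_mem_A]; intro hh; exact hvj (hh.trans (hoff j hj).symm)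
    · refine two_le_dist (hreach _) (fun hh => hvw' (Phi_inj hh)) ?_
      exact not_adj_of_common (En n (Sum.inr 0)) (mem_F.mpr (inr_mem_A.mpr rfl))
        (mem_F.mpr (inr_mem_A.mpr rfl))
end

section
/- Every finite graph with N ≥ 1 vertices and maximum degree at most 4 admits a VIED embedding into the three-dimensional grid graph Grid_{4N × (2N+2) × 2}. -/
open SimpleGraph

/-- The grid graph on `∏ i, {1,…,m i}`: two tuples are adjacent iff they differ in
exactly one coordinate, and in that coordinate by exactly 1. -/
def gridGraph {d : ℕ} (m : Fin d → ℕ) : SimpleGraph (∀ i, Fin (m i)) :=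
  SimpleGraph.fromRel (fun x y =>
    ∃ j, ((x j : ℕ) + 1 = (y j : ℕ)) ∧ ∀ i, i ≠ j → x i = y i)

/-!
Vertex `i` of `G` is placed at `(4i+1, 0, 0)`, in the lower layer `z = 0` of the grid. Its four
grid neighbours serve as four ports; through each port an arm climbs into the upper layer `z = 1`
and runs up one of the columns `x = 4i, …, 4i+3`. By the degree bound `G` has at most `2N` edges,
so they can be given distinct heights `2, …, 2N+1`; the edge at height `r` leaves the arms of its
two endpoints at `y = r`, drops to the lower layer and runs along the row `y = r` between the two
columns. Arms use the lower layer only at heights `0` and `1`, so two routes meet only in common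
end vertices, and every point of a route has `ℓ¹`-distance, hence grid distance, at least `2`
from all other vertices. The routes are walks; shortcutting them to paths (`Walk.bypass`) only
removes vertices.
-/

namespace SimpleGraph

variable {V : Type*}

theorem Walk.IsPath.ne_of_mem_tail_dropLast {G : SimpleGraph V} {u v x : V} {p : G.Walk u v}
    (hp : p.IsPath) (hx : x ∈ p.support.tail.dropLast) : x ≠ u ∧ x ≠ v := by
  have hne : p.support.tail ≠ [] := List.ne_nil_of_mem (List.mem_of_mem_dropLast hx)
  have hlast : p.support.tail.getLast hne = v := by
    rw [List.getLast_tail]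
    exact p.getLast_support
  have hsupp := hp.support_nodup
  rw [← p.cons_tail_support, ← List.dropLast_append_getLast hne, hlast] at hsupp
  simp only [List.nodup_cons, List.mem_append, List.mem_singleton, List.nodup_append] at hsupp
  grind

theorem exists_paths_reverse_eq {β : Type*} {G : SimpleGraph V} {H : SimpleGraph β}
    (f : V → β) (S : V → V → Set β)
    (hwalk : ∀ ⦃v w⦄, G.Adj v w →
      ∃ W : H.Walk (f v) (f w), ∀ x ∈ W.support, x ∈ S v w) :
    ∃ path : ∀ ⦃v w⦄, G.Adj v w → H.Walk (f v) (f w), ∀ ⦃v w⦄ (h : G.Adj v w),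
      (path h).IsPath ∧ path h.symm = (path h).reverse ∧
        ∀ x ∈ (path h).support, x ∈ S v w ∪ S w v := by
  classical
  -- any linear order on `V` decides which orientation of an edge carries the chosen walk
  let : LinearOrder V := IsWellOrder.linearOrder WellOrderingRel
  choose W hW using hwalk
  refine ⟨fun v w h => if v < w then (W h).bypass else (W h.symm).bypass.reverse,
    fun v w h => ?_⟩
  dsimp only
  refine ⟨?_, ?_, fun x hx => ?_⟩
  · split_ifs
    exacts [(W h).bypass_isPath, (W h.symm).bypass_isPath.reverse]
  · rcases lt_or_gt_of_ne h.ne with hvw | hwv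
    · simp [hvw, hvw.not_gt]
    · simp [hwv, hwv.not_gt]
  · split_ifs at hx
    · exact Or.inl (hW h x ((W h).support_bypass_subset_support hx))
    · rw [Walk.support_reverse, List.mem_reverse] at hx
      exact Or.inr (hW h.symm x ((W h.symm).support_bypass_subset_support hx))

variable [Fintype V] (G : SimpleGraph V) [DecidableRel G.Adj]

theorem exists_port_labelling {k : ℕ} [NeZero k] (hdeg : ∀ v, G.degree v ≤ k) :
    ∃ port : V → V → Fin k,
      ∀ ⦃v w w'⦄, G.Adj v w → G.Adj v w' → port v w = port v w' → w = w' := by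
  classical
  have e (v : V) : G.neighborSet v ↪ Fin k :=
    (Function.Embedding.nonempty_of_card_le <| by
      rw [Fintype.card_fin]
      exact (G.card_neighborSet_eq_degree v).trans_le (hdeg v)).some
  refine ⟨fun v w => if h : G.Adj v w then e v ⟨w, h⟩ else 0, fun v w w' h h' hww' => ?_⟩
  simp only [dif_pos h, dif_pos h'] at hww'
  exact congrArg Subtype.val ((e v).injective hww')

theorem exists_edge_labelling {k : ℕ} (hdeg : ∀ v, G.degree v ≤ 2 * k) :
    ∃ row : Sym2 V → ℕ,
      G.edgeSet.InjOn row ∧ ∀ e ∈ G.edgeSet, row e < k * Fintype.card V := by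
  classical
  have hcard : Fintype.card G.edgeSet ≤ k * Fintype.card V := by
    have hsum := Finset.sum_le_sum fun v (_ : v ∈ Finset.univ) => hdeg v
    rw [G.sum_degrees_eq_twice_card_edges, edgeFinset_card] at hsum
    simp only [Finset.sum_const, Finset.card_univ, smul_eq_mul] at hsum
    linarith
  have e : G.edgeSet ↪ Fin (k * Fintype.card V) :=
    (Function.Embedding.nonempty_of_card_le (by rwa [Fintype.card_fin])).some
  refine ⟨fun x => if h : x ∈ G.edgeSet then e ⟨x, h⟩ else 0, fun x hx y hy hxy => ?_,
    fun x hx => ?_⟩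
  · simp only [dif_pos hx, dif_pos hy] at hxy
    exact congrArg Subtype.val (e.injective (Fin.ext hxy))
  · simp only [dif_pos hx]
    exact Fin.isLt _

end SimpleGraph

namespace VIEDEmbedding

variable {α β : Type*} {G : SimpleGraph α} {H : SimpleGraph β}

theorem nonempty_of_regions (f : α → β) (R : α → α → Set β)
    (hf : Pairwise fun u v => 2 ≤ H.dist (f u) (f v))
    (hwalk : ∀ ⦃v w⦄, G.Adj v w →
      ∃ W : H.Walk (f v) (f w), ∀ x ∈ W.support, x = f v ∨ x = f w ∨ x ∈ R v w)
    (hdisj : ∀ ⦃v w v' w'⦄, G.Adj v w → G.Adj v' w' → s(v, w) ≠ s(v', w') →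
      Disjoint (R v w) (R v' w'))
    (hsep : ∀ ⦃u v w⦄, G.Adj v w → u ≠ v → u ≠ w →
      ∀ x ∈ R v w, 2 ≤ H.dist (f u) x) :
    Nonempty (VIEDEmbedding G H) := by
  obtain ⟨path, hpath⟩ := exists_paths_reverse_eq (G := G) f
    (fun v w => insert (f v) (insert (f w) (R v w))) hwalk
  have hsupp ⦃v w : α⦄ (h : G.Adj v w) :
      ∀ x ∈ (path h).support, x = f v ∨ x = f w ∨ x ∈ R v w ∪ R w v := by
    intro x hx
    have := (hpath h).2.2 x hx
    simp only [Set.mem_union, Set.mem_insert_iff] at this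
    grind
  refine ⟨{
    toFun := f
    inj := fun u v huv => by_contra fun hne => by simpa [huv] using hf hne
    path := path
    path_isPath := fun _ _ h => (hpath h).1
    path_symm := fun _ _ h => (hpath h).2.1
    interior_disjoint := ?_
    vertex_isolated := ?_ }⟩
  · intro v w v' w' h h' hne x hx hx'
    obtain ⟨hxv, hxw⟩ := (hpath h).1.ne_of_mem_tail_dropLast hx
    obtain ⟨hxv', hxw'⟩ := (hpath h').1.ne_of_mem_tail_dropLast hx'
    have hR := hsupp h x (List.mem_of_mem_tail (List.mem_of_mem_dropLast hx))
    have hR' := hsupp h' x (List.mem_of_mem_tail (List.mem_of_mem_dropLast hx'))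
    simp only [hxv, hxw, hxv', hxw', false_or] at hR hR'
    refine Set.disjoint_left.mp ?_ hR hR'
    simp only [Set.disjoint_union_left, Set.disjoint_union_right]
    refine ⟨⟨hdisj h h' hne, hdisj h.symm h' ?_⟩, hdisj h h'.symm ?_,
      hdisj h.symm h'.symm ?_⟩
    · rwa [Sym2.eq_swap (a := w)]
    · rwa [Sym2.eq_swap (a := w')]
    · rwa [Sym2.eq_swap (a := w), Sym2.eq_swap (a := w')]
  · intro u v w h huv huw x hx
    rcases hsupp h x hx with rfl | rfl | hR | hR
    · exact hf huv
    · exact hf huw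
    · exact hsep h huv huw x hR
    · exact hsep h.symm huw huv x hR

end VIEDEmbedding

theorem Set.mem_uIcc_pi {ι : Type*} {α : ι → Type*} [∀ i, Lattice (α i)]
    {a b z : ∀ i, α i} :
    z ∈ Set.uIcc a b ↔ ∀ i, z i ∈ Set.uIcc (a i) (b i) := by
  rw [← Set.pi_univ_uIcc, Set.mem_univ_pi]

section Grid

variable {d : ℕ} {m : Fin d → ℕ}

def gridCoords (x : ∀ i, Fin (m i)) : Fin d → ℕ := fun i => x i

def gridPoint (p : Fin d → ℕ) (hp : ∀ i, p i < m i) : ∀ i, Fin (m i) :=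
  fun i => ⟨p i, hp i⟩

def l1Dist (p q : Fin d → ℕ) : ℕ := ∑ i, Nat.dist (p i) (q i)

theorem gridCoords_injective : Function.Injective (gridCoords (m := m)) :=
  fun _ _ h => funext fun i => Fin.ext (congrFun h i)

theorem l1Dist_eq_one_of_gridGraph_adj {x y : ∀ i, Fin (m i)} (h : (gridGraph m).Adj x y) :
    l1Dist (gridCoords x) (gridCoords y) = 1 := by
  obtain ⟨-, ⟨j, hj, hother⟩ | ⟨j, hj, hother⟩⟩ := (fromRel_adj _ x y).mp h <;>
  · rw [l1Dist, Finset.sum_eq_single j (fun i _ hi => by simp [gridCoords, hother i hi])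
      (by simp)]
    simp only [gridCoords, Nat.dist]
    omega

theorem exists_gridGraph_adj_toward {x y : ∀ i, Fin (m i)} {j : Fin d} (hj : (x j : ℕ) < y j) :
    ∃ x', (gridGraph m).Adj x x' ∧
      l1Dist (gridCoords x') (gridCoords y) < l1Dist (gridCoords x) (gridCoords y) ∧
      gridCoords x' ∈ Set.uIcc (gridCoords x) (gridCoords y) := by
  let x' := Function.update x j ⟨x j + 1, by omega⟩
  have hx'j : (x' j : ℕ) = x j + 1 := by simp [x']
  have hx'i (i : Fin d) (hi : i ≠ j) : x' i = x i := by simp [x', hi]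
  refine ⟨x', (fromRel_adj _ x x').mpr
    ⟨fun h => ?_, Or.inl ⟨j, hx'j.symm, fun i hi => ?_⟩⟩, ?_, ?_⟩
  · rw [← h] at hx'j
    omega
  · exact (hx'i i hi).symm
  · refine Finset.sum_lt_sum (fun i _ => ?_) ⟨j, Finset.mem_univ _, ?_⟩
    · by_cases hi : i = j
      · subst hi
        simp only [gridCoords, Nat.dist]
        omega
      · simp [gridCoords, hx'i i hi]
    · simp only [gridCoords, Nat.dist]
      omega
  · refine Set.mem_uIcc_pi.mpr fun i => ?_
    by_cases hi : i = j
    · subst hi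
      exact Set.mem_uIcc_of_le (by simp [gridCoords, hx'j]) (by simpa [gridCoords, hx'j] using hj)
    · simp [gridCoords, hx'i i hi]

theorem exists_gridGraph_walk_uIcc (x y : ∀ i, Fin (m i)) :
    ∃ W : (gridGraph m).Walk x y,
      ∀ z ∈ W.support, gridCoords z ∈ Set.uIcc (gridCoords x) (gridCoords y) := by
  induction hn : l1Dist (gridCoords x) (gridCoords y) using Nat.strong_induction_on
    generalizing x y with
  | _ n ih =>
  by_cases hxy : x = y
  · subst hxy
    exact ⟨.nil, by simp⟩
  obtain ⟨j, hj⟩ : ∃ j, (x j : ℕ) ≠ y j := by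
    by_contra! h
    exact hxy (funext fun i => Fin.ext (h i))
  wlog hlt : (x j : ℕ) < y j generalizing x y
  · obtain ⟨W, hW⟩ := this y x (by simpa only [l1Dist, Nat.dist_comm] using hn) (Ne.symm hxy)
      hj.symm (by omega)
    exact ⟨W.reverse, by simpa [Set.uIcc_comm] using hW⟩
  obtain ⟨x', hadj, hlt', hx'⟩ := exists_gridGraph_adj_toward hlt
  obtain ⟨W, hW⟩ := ih _ (hn ▸ hlt') x' y rfl
  refine ⟨.cons hadj W, fun z hz => ?_⟩
  rcases List.mem_cons.mp (Walk.support_cons hadj W ▸ hz) with rfl | hz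
  · exact Set.left_mem_uIcc
  · exact Set.uIcc_subset_uIcc hx' Set.right_mem_uIcc (hW z hz)

theorem gridGraph_preconnected : (gridGraph m).Preconnected := fun x y =>
  (exists_gridGraph_walk_uIcc x y).elim fun W _ => W.reachable

theorem two_le_gridGraph_dist {x y : ∀ i, Fin (m i)}
    (h : 2 ≤ l1Dist (gridCoords x) (gridCoords y)) : 2 ≤ (gridGraph m).dist x y :=
  (gridGraph_preconnected x y).one_lt_dist_of_ne_of_not_adj (by rintro rfl; simp [l1Dist] at h)
    fun hadj => by rw [l1Dist_eq_one_of_gridGraph_adj hadj] at h; omega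

def GridJoined (m : Fin d → ℕ) (s : Set (Fin d → ℕ)) (p q : Fin d → ℕ) : Prop :=
  ∃ (x y : ∀ i, Fin (m i)), gridCoords x = p ∧ gridCoords y = q ∧
    ∃ W : (gridGraph m).Walk x y, ∀ z ∈ W.support, gridCoords z ∈ s

namespace GridJoined

variable {s t : Set (Fin d → ℕ)} {p q r : Fin d → ℕ}

theorem exists_walk {x y : ∀ i, Fin (m i)} (h : GridJoined m s (gridCoords x) (gridCoords y)) :
    ∃ W : (gridGraph m).Walk x y, ∀ z ∈ W.support, gridCoords z ∈ s := by
  obtain ⟨x', y', hx, hy, hW⟩ := h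
  obtain rfl := gridCoords_injective hx
  obtain rfl := gridCoords_injective hy
  exact hW

theorem mono (h : GridJoined m s p q) (hst : s ⊆ t) : GridJoined m t p q := by
  obtain ⟨x, y, hx, hy, W, hW⟩ := h
  exact ⟨x, y, hx, hy, W, fun z hz => hst (hW z hz)⟩

theorem symm (h : GridJoined m s p q) : GridJoined m s q p := by
  obtain ⟨x, y, hx, hy, W, hW⟩ := h
  exact ⟨y, x, hy, hx, W.reverse, by simpa using hW⟩

theorem trans (h₁ : GridJoined m s p q) (h₂ : GridJoined m t q r) :
    GridJoined m (s ∪ t) p r := by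
  obtain ⟨x, y, hx, hy, W₁, hW₁⟩ := h₁
  obtain ⟨y', z, hy', hz, W₂, hW₂⟩ := h₂
  obtain rfl := gridCoords_injective (hy.trans hy'.symm)
  refine ⟨x, z, hx, hz, W₁.append W₂, fun w hw => ?_⟩
  rcases (Walk.mem_support_append_iff W₁ W₂).mp hw with hw | hw
  exacts [Or.inl (hW₁ w hw), Or.inr (hW₂ w hw)]

end GridJoined

theorem gridJoined_uIcc {p q : Fin d → ℕ} (hp : ∀ i, p i < m i) (hq : ∀ i, q i < m i) :
    GridJoined m (Set.uIcc p q) p q := by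
  obtain ⟨W, hW⟩ := exists_gridGraph_walk_uIcc (gridPoint p hp) (gridPoint q hq)
  exact ⟨_, _, rfl, rfl, W, hW⟩

def polyline : List (Fin d → ℕ) → Set (Fin d → ℕ)
  | [] => ∅
  | [p] => {p}
  | p :: q :: l => Set.uIcc p q ∪ polyline (q :: l)

theorem gridJoined_polyline {p : Fin d → ℕ} (l : List (Fin d → ℕ))
    (hl : ∀ q ∈ p :: l, ∀ i, q i < m i) :
    GridJoined m (polyline (p :: l)) p ((p :: l).getLast (List.cons_ne_nil _ _)) := by
  induction l generalizing p with
  | nil => simpa [polyline] using gridJoined_uIcc (hl p (by simp)) (hl p (by simp))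
  | cons q l ih =>
    simpa [polyline] using (gridJoined_uIcc (hl p (by simp)) (hl q (by simp))).trans
      (ih fun r hr => hl r (List.mem_cons_of_mem _ hr))

end Grid

namespace GridRouting

section Layout

theorem mem_uIcc_vec3 {a b c a' b' c' : ℕ} {q : Fin 3 → ℕ} :
    q ∈ Set.uIcc ![a, b, c] ![a', b', c'] ↔
      q 0 ∈ Set.uIcc a a' ∧ q 1 ∈ Set.uIcc b b' ∧ q 2 ∈ Set.uIcc c c' := by
  simp [Set.mem_uIcc_pi, Fin.forall_fin_succ]

theorem eq_vec3_iff {a b c : ℕ} {q : Fin 3 → ℕ} :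
    q = ![a, b, c] ↔ q 0 = a ∧ q 1 = b ∧ q 2 = c := by
  simp [funext_iff, Fin.forall_fin_succ]

def vertexPos (i : ℕ) : Fin 3 → ℕ := ![4 * i + 1, 0, 0]

def portColumn (i : ℕ) (p : Fin 4) : ℕ := 4 * i + ![1, 0, 2, 3] p

/-- Port `p` leaves `vertexPos i` through one of its grid neighbours and climbs the column
`x = portColumn i p` of the upper layer up to height `r`; `armRoute i p r` lists its corners. -/
def arm (i : ℕ) (p : Fin 4) (r : ℕ) : Set (Fin 3 → ℕ) :=
  match p with
  | 0 => {q | q 0 = 4 * i + 1 ∧ q 1 ≤ r ∧ q 2 = 1}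
  | 1 => {q | q 0 = 4 * i ∧ (q 1 = 0 ∧ q 2 = 0 ∨ q 1 ≤ r ∧ q 2 = 1)}
  | 2 => {q | q 0 = 4 * i + 2 ∧ (q 1 = 0 ∧ q 2 = 0 ∨ q 1 ≤ r ∧ q 2 = 1)}
  | 3 => {q | 4 * i + 1 ≤ q 0 ∧ q 0 ≤ 4 * i + 3 ∧ q 1 = 1 ∧ q 2 = 0 ∨
              q 0 = 4 * i + 3 ∧ 1 ≤ q 1 ∧ q 1 ≤ r ∧ q 2 = 1}

def armRoute (i : ℕ) (p : Fin 4) (r : ℕ) : List (Fin 3 → ℕ) :=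
  match p with
  | 0 => [![4 * i + 1, 0, 1], ![4 * i + 1, r, 1]]
  | 1 => [![4 * i, 0, 0], ![4 * i, 0, 1], ![4 * i, r, 1]]
  | 2 => [![4 * i + 2, 0, 0], ![4 * i + 2, 0, 1], ![4 * i + 2, r, 1]]
  | 3 => [![4 * i + 1, 1, 0], ![4 * i + 3, 1, 0], ![4 * i + 3, 1, 1], ![4 * i + 3, r, 1]]

def rowSegment (c c' r : ℕ) : Set (Fin 3 → ℕ) :=
  {q | min c c' ≤ q 0 ∧ q 0 ≤ max c c' ∧ q 1 = r ∧ q 2 = 0}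

def edgeRegion (i j : ℕ) (p p' : Fin 4) (r : ℕ) : Set (Fin 3 → ℕ) :=
  arm i p r ∪ rowSegment (portColumn i p) (portColumn j p') r ∪ arm j p' r

variable {i j r : ℕ}

theorem portColumn_le (i : ℕ) (p : Fin 4) : portColumn i p ≤ 4 * i + 3 := by
  fin_cases p <;> simp [portColumn]

theorem top_mem_arm (p : Fin 4) (hr : 1 ≤ r) : ![portColumn i p, r, 1] ∈ arm i p r := by
  fin_cases p <;> simp [arm, portColumn, hr]

theorem eq_of_mem_arm_of_mem_arm {i' r' : ℕ} {p p' : Fin 4} {q : Fin 3 → ℕ}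
    (h : q ∈ arm i p r) (h' : q ∈ arm i' p' r') : i = i' ∧ p = p' := by
  fin_cases p <;> fin_cases p' <;> grind [arm]

theorem notMem_rowSegment_of_mem_arm {c c' r' : ℕ} {p : Fin 4} {q : Fin 3 → ℕ}
    (hr' : 2 ≤ r') (h : q ∈ arm i p r) : q ∉ rowSegment c c' r' := by
  fin_cases p <;> grind [arm, rowSegment]

theorem eq_of_mem_rowSegment_of_mem_rowSegment {c c' e e' r' : ℕ} {q : Fin 3 → ℕ}
    (h : q ∈ rowSegment c c' r) (h' : q ∈ rowSegment e e' r') : r = r' :=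
  h.2.2.1.symm.trans h'.2.2.1

theorem l1Dist_vertexPos (u : ℕ) (q : Fin 3 → ℕ) :
    l1Dist (vertexPos u) q = Nat.dist (4 * u + 1) (q 0) + q 1 + q 2 := by
  simp [l1Dist, vertexPos, Fin.sum_univ_three, Nat.dist]

theorem two_le_l1Dist_vertexPos {u : ℕ} (hu : u ≠ i) :
    2 ≤ l1Dist (vertexPos u) (vertexPos i) := by
  rw [l1Dist_vertexPos]
  simp only [vertexPos, Matrix.cons_val_zero, Matrix.cons_val_one, Matrix.cons_val_two,
    Matrix.head_cons, Matrix.tail_cons, Nat.dist]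
  omega

theorem two_le_l1Dist_of_mem_edgeRegion {u : ℕ} {p p' : Fin 4} {q : Fin 3 → ℕ} (hui : u ≠ i)
    (huj : u ≠ j) (hr : 2 ≤ r) (hq : q ∈ edgeRegion i j p p' r) :
    2 ≤ l1Dist (vertexPos u) q := by
  rw [l1Dist_vertexPos]
  rcases hq with (hq | hq) | hq
  · fin_cases p <;> grind [arm, Nat.dist]
  · grind [rowSegment]
  · fin_cases p' <;> grind [arm, Nat.dist]

end Layout

abbrev dims (N : ℕ) : Fin 3 → ℕ := ![4 * N, 2 * N + 2, 2]

variable {N i j r : ℕ}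

theorem forall_vec3_lt_dims_iff {a b c : ℕ} :
    (∀ k, ![a, b, c] k < dims N k) ↔ a < 4 * N ∧ b < 2 * N + 2 ∧ c < 2 := by
  simp [Fin.forall_fin_succ]

def gridVertex (i : Fin N) : ∀ k, Fin (dims N k) :=
  gridPoint (vertexPos i) (forall_vec3_lt_dims_iff.mpr (by omega))

theorem gridJoined_arm (p : Fin 4) (hi : i < N) (hr : 1 ≤ r) (hrN : r ≤ 2 * N + 1) :
    GridJoined (dims N) ({vertexPos i} ∪ arm i p r) (vertexPos i) ![portColumn i p, r, 1] := by
  have hend : (vertexPos i :: armRoute i p r).getLast (List.cons_ne_nil _ _) =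
      ![portColumn i p, r, 1] := by
    fin_cases p <;> rfl
  rw [← hend]
  refine (gridJoined_polyline (armRoute i p r) ?_).mono ?_
  · fin_cases p <;>
      simp only [armRoute, vertexPos, List.forall_mem_cons, List.not_mem_nil, IsEmpty.forall_iff,
        implies_true, and_true, forall_vec3_lt_dims_iff] <;>
      omega
  · intro q hq
    fin_cases p <;>
      simp only [armRoute, polyline, vertexPos, Set.mem_union, mem_uIcc_vec3, Set.mem_uIcc,
        Set.mem_singleton_iff, eq_vec3_iff] at hq ⊢ <;>
      grind [arm]

theorem gridJoined_row {c c' : ℕ} (hc : c < 4 * N) (hc' : c' < 4 * N) (hrN : r ≤ 2 * N + 1) :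
    GridJoined (dims N) ({![c, r, 1], ![c', r, 1]} ∪ rowSegment c c' r) ![c, r, 1]
      ![c', r, 1] := by
  refine (gridJoined_polyline (m := dims N) [![c, r, 0], ![c', r, 0], ![c', r, 1]] ?_).mono ?_
  · simp only [List.forall_mem_cons, List.not_mem_nil, IsEmpty.forall_iff, implies_true, and_true,
      forall_vec3_lt_dims_iff]
    omega
  · intro q hq
    simp only [polyline, rowSegment, Set.mem_union, mem_uIcc_vec3, Set.mem_uIcc,
      Set.mem_insert_iff, Set.mem_singleton_iff, Set.mem_ofPred_eq, eq_vec3_iff] at hq ⊢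
    omega

theorem gridJoined_edge (p p' : Fin 4) (hi : i < N) (hj : j < N) (hr : 1 ≤ r)
    (hrN : r ≤ 2 * N + 1) :
    GridJoined (dims N) ({vertexPos i, vertexPos j} ∪ edgeRegion i j p p' r)
      (vertexPos i) (vertexPos j) := by
  have hcol {k : ℕ} (p : Fin 4) (hk : k < N) : portColumn k p < 4 * N := by
    have := portColumn_le k p
    omega
  refine (((gridJoined_arm p hi hr hrN).trans (gridJoined_row (hcol p hi) (hcol p' hj) hrN)).trans
    (gridJoined_arm p' hj hr hrN).symm).mono ?_
  have htop_i := top_mem_arm (i := i) p hr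
  have htop_j := top_mem_arm (i := j) p' hr
  intro q hq
  simp only [edgeRegion, Set.mem_union, Set.mem_insert_iff, Set.mem_singleton_iff] at hq ⊢
  grind

section Labelling

variable {V : Type*} {G : SimpleGraph V}

/-- The edge `vw` is routed at height `row s(v, w) + 2`, above the parts of the arms that lie in
the lower layer. -/
def routeRegion (idx : V ↪ Fin N) (port : V → V → Fin 4) (row : Sym2 V → ℕ) (v w : V) :
    Set (Fin 3 → ℕ) :=
  edgeRegion (idx v) (idx w) (port v w) (port w v) (row s(v, w) + 2)

theorem disjoint_routeRegion {idx : V ↪ Fin N} {port : V → V → Fin 4} {row : Sym2 V → ℕ}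
    (hport : ∀ ⦃v w w'⦄, G.Adj v w → G.Adj v w' → port v w = port v w' → w = w')
    (hrow : G.edgeSet.InjOn row) {v w v' w' : V} (h : G.Adj v w) (h' : G.Adj v' w')
    (hne : s(v, w) ≠ s(v', w')) :
    Disjoint (routeRegion idx port row v w) (routeRegion idx port row v' w') := by
  have harm ⦃a b a' b' : V⦄ {r r' : ℕ} (hab : G.Adj a b) (hab' : G.Adj a' b')
      (q : Fin 3 → ℕ) (hq : q ∈ arm (idx a) (port a b) r)
      (hq' : q ∈ arm (idx a') (port a' b') r') : a = a' ∧ b = b' := by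
    obtain ⟨hi, hp⟩ := eq_of_mem_arm_of_mem_arm hq hq'
    obtain rfl := idx.injective (Fin.ext hi)
    exact ⟨rfl, hport hab hab' hp⟩
  rw [Set.disjoint_left]
  intro q hq hq'
  simp only [routeRegion, edgeRegion, Set.mem_union] at hq hq'
  rcases hq with (hq | hq) | hq <;> rcases hq' with (hq' | hq') | hq'
  · obtain ⟨rfl, rfl⟩ := harm h h' q hq hq'
    exact hne rfl
  · exact notMem_rowSegment_of_mem_arm (by omega) hq hq'
  · obtain ⟨rfl, rfl⟩ := harm h h'.symm q hq hq'
    exact hne Sym2.eq_swap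
  · exact notMem_rowSegment_of_mem_arm (by omega) hq' hq
  · have := eq_of_mem_rowSegment_of_mem_rowSegment hq hq'
    exact hne (hrow h h' (by omega))
  · exact notMem_rowSegment_of_mem_arm (by omega) hq' hq
  · obtain ⟨rfl, rfl⟩ := harm h.symm h' q hq hq'
    exact hne Sym2.eq_swap
  · exact notMem_rowSegment_of_mem_arm (by omega) hq hq'
  · obtain ⟨rfl, rfl⟩ := harm h.symm h'.symm q hq hq'
    exact hne rfl

theorem nonempty_viedEmbedding_of_labelling (idx : V ↪ Fin N) {port : V → V → Fin 4}
    {row : Sym2 V → ℕ}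
    (hport : ∀ ⦃v w w'⦄, G.Adj v w → G.Adj v w' → port v w = port v w' → w = w')
    (hrow : G.edgeSet.InjOn row) (hrowN : ∀ e ∈ G.edgeSet, row e < 2 * N) :
    Nonempty (VIEDEmbedding G (gridGraph (dims N))) := by
  have hidx {u v : V} (huv : u ≠ v) : (idx u : ℕ) ≠ idx v :=
    fun h => huv (idx.injective (Fin.ext h))
  have hr {v w : V} (h : G.Adj v w) : 1 ≤ row s(v, w) + 2 ∧ row s(v, w) + 2 ≤ 2 * N + 1 := by
    have := hrowN s(v, w) h
    omega
  refine VIEDEmbedding.nonempty_of_regions (fun v => gridVertex (idx v))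
    (fun v w => gridCoords ⁻¹' routeRegion idx port row v w) ?_ ?_ ?_ ?_
  · intro u v huv
    exact two_le_gridGraph_dist (two_le_l1Dist_vertexPos (hidx huv))
  · intro v w h
    obtain ⟨W, hW⟩ := (gridJoined_edge (port v w) (port w v) (idx v).isLt (idx w).isLt (hr h).1
      (hr h).2).exists_walk (x := gridVertex (idx v)) (y := gridVertex (idx w))
    refine ⟨W, fun x hx => ?_⟩
    rcases hW x hx with (hv | hw) | hR
    · exact Or.inl (gridCoords_injective hv)
    · exact Or.inr (Or.inl (gridCoords_injective hw))
    · exact Or.inr (Or.inr hR)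
  · intro v w v' w' h h' hne
    exact (disjoint_routeRegion hport hrow h h' hne).preimage _
  · intro u v w h huv huw x hx
    exact two_le_gridGraph_dist
      (two_le_l1Dist_of_mem_edgeRegion (hidx huv) (hidx huw) (by omega) hx)

end Labelling

end GridRouting

theorem stmt_7_general {V : Type*} [Fintype V]
    (G : SimpleGraph V) [DecidableRel G.Adj]
    (N : ℕ) (hN : N = Fintype.card V)
    (hdeg : ∀ v, G.degree v ≤ 4) :
    Nonempty (VIEDEmbedding G (gridGraph ![4 * N, 2 * N + 2, 2])) := by
  subst hN
  obtain ⟨port, hport⟩ := G.exists_port_labelling hdeg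
  obtain ⟨row, hrow, hrowN⟩ := G.exists_edge_labelling (k := 2) hdeg
  exact GridRouting.nonempty_viedEmbedding_of_labelling (Fintype.equivFin V).toEmbedding hport
    hrow hrowN

theorem stmt_7 {V : Type*} [Fintype V] [DecidableEq V]
    (G : SimpleGraph V) [DecidableRel G.Adj]
    (N : ℕ) (hN : N = Fintype.card V) (hN1 : 1 ≤ N)
    (hdeg : ∀ v, G.degree v ≤ 4) :
    Nonempty (VIEDEmbedding G (gridGraph ![4 * N, 2 * N + 2, 2])) :=
  stmt_7_general G N hN hdeg
end

section
/- Let A and B be nonempty finite sets and u_A, u_B : A × B → ℝ. The two-player game (A,B,u_A,u_B) is an exact potential game if and only if for every a,a' ∈ A and every b,b' ∈ B: (u_A(a',b) − u_A(a,b)) + (u_B(a',b') − u_B(a',b)) + (u_A(a,b') − u_A(a',b')) + (u_B(a,b) − u_B(a,b')) = 0. -/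
/-- `φ` is an exact potential for the two-player game `(A, B, uA, uB)`. -/
def IsExactPotential2 {A B : Type*} (uA uB : A → B → ℝ) (φ : A → B → ℝ) : Prop :=
  (∀ (a a' : A) (b : B), uA a b - uA a' b = φ a b - φ a' b) ∧
  (∀ (a : A) (b b' : B), uB a b - uB a b' = φ a b - φ a b')

theorem stmt_8 {A B : Type*} [Fintype A] [Fintype B] [Nonempty A] [Nonempty B]
    (uA uB : A → B → ℝ) :
    (∃ φ : A → B → ℝ, IsExactPotential2 uA uB φ) ↔
      ∀ (a a' : A) (b b' : B),
        (uA a' b - uA a b) + (uB a' b' - uB a' b) +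
        (uA a b' - uA a' b') + (uB a b - uB a b') = 0 := by
  constructor
  · rintro ⟨φ, hA, hB⟩ a a' b b'
    have h1 := hA a' a b
    have h2 := hB a' b' b
    have h3 := hA a a' b'
    have h4 := hB a b b'
    linarith
  · intro h
    obtain ⟨a0⟩ := ‹Nonempty A›
    refine ⟨fun a b => uA a b - uA a0 b + uB a0 b, ?_, ?_⟩
    · intro a a' b; ring
    · intro a b b'
      have := h a0 a b b'
      dsimp only
      linarith
end

section
/- Let A₁,…,A_n be nonempty finite sets and u₁,…,u_n : A₁×⋯×A_n → ℝ. For profiles a, b ∈ A₁×⋯×A_n, a permutation π of {1,…,n}, and 0 ≤ к ≤ n, let σ(b,a,π,к) denote the profile whose i-th coordinate equals b_i if i ∈ {π(1),…,π(к)} and a_i otherwise. Then the n-player game (A,u) is an exact potential game if and only if for every pair of profiles a,b and every pair of permutations π̄, π̲ of {1,…,n}: Σ_{k=1}^{n} [u_{π̄(k)}(σ(b,a,π̄,k)) − u_{π̄(k)}(σ(b,a,π̄,k−1))] + Σ_{k=1}^{n} [u_{π̲(k)}(σ(a,b,π̲,k)) − u_{π̲(k)}(σ(a,b,π̲,k−1))]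 = 0. -/
/-- `φ` is an exact potential for the `n`-player game with utilities `u`. -/
def IsExactPotentialN {n : ℕ} {A : Fin n → Type*}
    (u : ∀ _ : Fin n, (∀ i, A i) → ℝ) (φ : (∀ i, A i) → ℝ) : Prop :=
  ∀ (i : Fin n) (a : ∀ j, A j) (a' : A i),
    u i a - u i (Function.update a i a') = φ a - φ (Function.update a i a')

/-- `σ(b, a, π, k)`: the profile whose `i`-th coordinate is `b i` if `i ∈ {π(1),…,π(k)}`
(0-indexed: if `π⁻¹ i < k`) and `a i` otherwise. -/
def profileShift {n : ℕ} {A : Fin n → Type*} (b a : ∀ i, A i)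
    (π : Equiv.Perm (Fin n)) (k : ℕ) : ∀ i, A i :=
  fun i => if (π.symm i : ℕ) < k then b i else a i

/-- The sum of utility changes along the path from `a` to `b` in order `π`. -/
def pathSum {n : ℕ} {A : Fin n → Type*} (u : ∀ _ : Fin n, (∀ i, A i) → ℝ)
    (a b : ∀ i, A i) (π : Equiv.Perm (Fin n)) : ℝ :=
  ∑ k : Fin n, (u (π k) (profileShift b a π ((k : ℕ) + 1)) -
    u (π k) (profileShift b a π (k : ℕ)))

lemma profileShift_zero {n : ℕ} {A : Fin n → Type*} (b a : ∀ i, A i)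
    (π : Equiv.Perm (Fin n)) : profileShift b a π 0 = a := by
  funext i; simp [profileShift]

lemma profileShift_of_le {n : ℕ} {A : Fin n → Type*} (b a : ∀ i, A i)
    (π : Equiv.Perm (Fin n)) {k : ℕ} (h : n ≤ k) : profileShift b a π k = b := by
  funext i; simp [profileShift, lt_of_lt_of_le (π.symm i).isLt h]

lemma profileShift_update {n : ℕ} {A : Fin n → Type*} (b a : ∀ i, A i)
    (π : Equiv.Perm (Fin n)) (k : Fin n) :
    Function.update (profileShift b a π ((k : ℕ) + 1)) (π k) (a (π k)) =
      profileShift b a π (k : ℕ) := by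
  funext j
  rcases eq_or_ne j (π k) with rfl | hj
  · simp [profileShift]
  · rw [Function.update_of_ne hj]
    simp only [profileShift]
    have hne : π.symm j ≠ k := by
      intro hc
      exact hj (by rw [← hc, Equiv.apply_symm_apply])
    have hne' : ((π.symm j : Fin n) : ℕ) ≠ (k : ℕ) := fun hc => hne (Fin.ext hc)
    by_cases hlt : ((π.symm j : Fin n) : ℕ) < (k : ℕ)
    · simp [hlt, Nat.lt_succ_of_lt hlt]
    · have h2 : ¬ ((π.symm j : Fin n) : ℕ) < (k : ℕ) + 1 := by omega
      simp [hlt, h2]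

lemma pathSum_of_potential {n : ℕ} {A : Fin n → Type*}
    (u : ∀ _ : Fin n, (∀ i, A i) → ℝ) (φ : (∀ i, A i) → ℝ)
    (hφ : IsExactPotentialN u φ) (a b : ∀ i, A i) (π : Equiv.Perm (Fin n)) :
    pathSum u a b π = φ b - φ a := by
  have hterm : ∀ k : Fin n,
      u (π k) (profileShift b a π ((k : ℕ) + 1)) - u (π k) (profileShift b a π (k : ℕ)) =
        φ (profileShift b a π ((k : ℕ) + 1)) - φ (profileShift b a π (k : ℕ)) := by
    intro k
    have := hφ (π k) (profileShift b a π ((k : ℕ) + 1)) (a (π k))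
    rwa [profileShift_update] at this
  unfold pathSum
  simp_rw [hterm]
  rw [Fin.sum_univ_eq_sum_range
    (fun m => φ (profileShift b a π (m + 1)) - φ (profileShift b a π m)) n]
  rw [Finset.sum_range_sub (fun m => φ (profileShift b a π m)) n]
  rw [profileShift_zero, profileShift_of_le _ _ _ le_rfl]

lemma profileShift_congr {n : ℕ} {A : Fin n → Type*} (a : ∀ i, A i) {x y : ∀ i, A i}
    (π : Equiv.Perm (Fin n)) (i : Fin n) (hxy : ∀ j, j ≠ i → x j = y j) {m : ℕ}
    (hm : ¬ ((π.symm i : ℕ) < m)) :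
    profileShift x a π m = profileShift y a π m := by
  funext j
  simp only [profileShift]
  split_ifs with hj
  · rcases eq_or_ne j i with rfl | hne
    · exact absurd hj hm
    · exact hxy j hne
  · rfl

theorem stmt_9 {n : ℕ} {A : Fin n → Type*} [∀ i, Fintype (A i)] [∀ i, Nonempty (A i)]
    (u : ∀ _ : Fin n, (∀ i, A i) → ℝ) :
    (∃ φ : (∀ i, A i) → ℝ, IsExactPotentialN u φ) ↔
      ∀ (a b : ∀ i, A i) (π₁ π₂ : Equiv.Perm (Fin n)),
        (∑ k : Fin n,
          (u (π₁ k) (profileShift b a π₁ ((k : ℕ) + 1)) -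
           u (π₁ k) (profileShift b a π₁ (k : ℕ)))) +
        (∑ k : Fin n,
          (u (π₂ k) (profileShift a b π₂ ((k : ℕ) + 1)) -
           u (π₂ k) (profileShift a b π₂ (k : ℕ)))) = 0 := by
  constructor
  · rintro ⟨φ, hφ⟩ a b π₁ π₂
    have h1 := pathSum_of_potential u φ hφ a b π₁
    have h2 := pathSum_of_potential u φ hφ b a π₂
    show pathSum u a b π₁ + pathSum u b a π₂ = 0
    rw [h1, h2]; ring
  · intro h
    have : Nonempty (∀ i, A i) := ⟨fun i => Classical.arbitrary _⟩
    obtain ⟨a₀⟩ := this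
    refine ⟨fun x => pathSum u a₀ x 1, ?_⟩
    intro i x x'
    set x'' := Function.update x i x' with hx''
    have hn : 0 < n := i.pos
    set L : Fin n := ⟨n - 1, Nat.sub_lt hn one_pos⟩ with hL
    have hLval : (L : ℕ) = n - 1 := rfl
    set π : Equiv.Perm (Fin n) := Equiv.swap i L with hπ
    have hπi : π.symm i = L := by
      rw [hπ, Equiv.symm_swap, Equiv.swap_apply_left]
    have hπL : π L = i := by
      rw [hπ, Equiv.swap_apply_right]
    have hindep : ∀ y : ∀ j, A j, pathSum u a₀ y 1 = pathSum u a₀ y π := by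
      intro y
      have h1 : pathSum u a₀ y 1 + pathSum u y a₀ 1 = 0 := h a₀ y 1 1
      have h2 : pathSum u a₀ y π + pathSum u y a₀ 1 = 0 := h a₀ y π 1
      linarith
    have hagree : ∀ j, j ≠ i → x j = x'' j := by
      intro j hj
      rw [hx'', Function.update_of_ne hj]
    have hcong : ∀ {m : ℕ}, m ≤ n - 1 →
        profileShift x a₀ π m = profileShift x'' a₀ π m := by
      intro m hm
      exact profileShift_congr a₀ π i hagree (by rw [hπi]; omega)
    have key : pathSum u a₀ x π - pathSum u a₀ x'' π = u i x - u i x'' := by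
      unfold pathSum
      rw [← Finset.sum_sub_distrib]
      rw [Finset.sum_eq_single L]
      · rw [hπL]
        have hLn : (L : ℕ) + 1 = n := by omega
        rw [hLn, profileShift_of_le x a₀ π le_rfl, profileShift_of_le x'' a₀ π le_rfl]
        rw [hcong (le_refl (n - 1))]
        ring
      · intro k _ hk
        have hkv : (k : ℕ) ≠ n - 1 := by
          intro hc; exact hk (Fin.ext (by rw [hc, hLval]))
        have hk1 : (k : ℕ) + 1 ≤ n - 1 := by
          have := k.isLt; omega
        rw [hcong hk1, hcong (by omega : (k : ℕ) ≤ n - 1)]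
        ring
      · intro hL'
        exact absurd (Finset.mem_univ L) hL'
    calc u i x - u i x'' = pathSum u a₀ x π - pathSum u a₀ x'' π := key.symm
      _ = pathSum u a₀ x 1 - pathSum u a₀ x'' 1 := by rw [hindep x, hindep x'']
end

section
/- Let G=(V,E) be a finite graph in which every vertex has exactly 4 neighbors, enumerated by functions n₁,n₂,n₃,n₄ : V → V (so that n₁(v),…,n₄(v) are the four distinct neighbors of v). Let W ≥ 1 be an integer and f_A, f_B : V → {1,…,W}. Both players' action set is V × {1,…,W}⁵; for an action (v, x) with x=(x₀,x₁,…,x₄) define val^{(v,x)} : V → ℝ by val^{(v,x)}(z) = x₀ if z = v, x_i if z = n_i(v) for i ∈ {1,…,4}, and 0 otherwise; write n_A(v) = (f_A(v), f_A(n₁(v)),…,f_A(n₄(v))) and n_B(v) = (f_B(v), f_B(n₁(v)),…,f_B(n₄(v))); and let D(v,w) = 1 if v = w or {v,w} ∈ E, and 0 otherwise. Define u_A((v,x),(w,y)) = 4W·D(v,w) + 4W·1[x = n_A(v)] + val^{(w,y)}(v) + val^{(v,x)}(w) + f_A(v) and u_B((v,x),(w,y)) = 4W·D(v,w) + 4W·1[y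 = n_B(w)] + val^{(w,y)}(v) + val^{(v,x)}(w) + f_B(w). Then this two-player game is an exact potential game with potential φ((v,x),(w,y)) = 4W·D(v,w) + 4W·1[x = n_A(v)] + 4W·1[y = n_B(w)] + val^{(w,y)}(v) + val^{(v,x)}(w) + f_A(v) + f_B(w). -/
/-- The action set `V × {1,…,W}⁵`: a vertex together with a report of five values in
`{1,…,W}` (index `0` for the vertex itself, indices `1,…,4` for its four neighbors). -/
def RepAct (V : Type*) (W : ℕ) : Type _ :=
  V × {x : Fin 5 → ℕ // ∀ i, x i ∈ Finset.Icc 1 W}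

/-- `val^{(v,x)}(z)`: `x₀` if `z = v`, `xᵢ` if `z = nᵢ(v)` (for `i ∈ {1,…,4}`),
and `0` otherwise. -/
noncomputable def valRep {V : Type*} [DecidableEq V] (nbr : Fin 4 → V → V)
    (v : V) (x : Fin 5 → ℕ) (z : V) : ℝ :=
  if z = v then (x 0 : ℝ)
  else ∑ i : Fin 4, if z = nbr i v then (x i.succ : ℝ) else 0

/-- The truthful report `n_f(v) = (f(v), f(n₁(v)), …, f(n₄(v)))`. -/
def truthRep {V : Type*} (nbr : Fin 4 → V → V) (f : V → ℕ) (v : V) : Fin 5 → ℕ :=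
  Fin.cons (f v) (fun i => f (nbr i v))

/-- `D(v,w) = 1` if `v = w` or `{v,w} ∈ E`, and `0` otherwise. -/
noncomputable def closeIndicator {V : Type*} [DecidableEq V] (G : SimpleGraph V)
    [DecidableRel G.Adj] (v w : V) : ℝ :=
  if v = w ∨ G.Adj v w then 1 else 0

/-- Alice's utility. -/
noncomputable def gameUA {V : Type*} [DecidableEq V] (G : SimpleGraph V)
    [DecidableRel G.Adj] (nbr : Fin 4 → V → V) (W : ℕ) (fA : V → ℕ) :
    RepAct V W → RepAct V W → ℝ :=
  fun p q =>
    4 * W * closeIndicator G p.1 q.1 +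
    4 * W * (if (p.2 : Fin 5 → ℕ) = truthRep nbr fA p.1 then 1 else 0) +
    valRep nbr q.1 q.2 p.1 + valRep nbr p.1 p.2 q.1 + (fA p.1 : ℝ)

/-- Bob's utility. -/
noncomputable def gameUB {V : Type*} [DecidableEq V] (G : SimpleGraph V)
    [DecidableRel G.Adj] (nbr : Fin 4 → V → V) (W : ℕ) (fB : V → ℕ) :
    RepAct V W → RepAct V W → ℝ :=
  fun p q =>
    4 * W * closeIndicator G p.1 q.1 +
    4 * W * (if (q.2 : Fin 5 → ℕ) = truthRep nbr fB q.1 then 1 else 0) +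
    valRep nbr q.1 q.2 p.1 + valRep nbr p.1 p.2 q.1 + (fB q.1 : ℝ)

/-- The claimed potential function. -/
noncomputable def gamePhi {V : Type*} [DecidableEq V] (G : SimpleGraph V)
    [DecidableRel G.Adj] (nbr : Fin 4 → V → V) (W : ℕ) (fA fB : V → ℕ) :
    RepAct V W → RepAct V W → ℝ :=
  fun p q =>
    4 * W * closeIndicator G p.1 q.1 +
    4 * W * (if (p.2 : Fin 5 → ℕ) = truthRep nbr fA p.1 then 1 else 0) +
    4 * W * (if (q.2 : Fin 5 → ℕ) = truthRep nbr fB q.1 then 1 else 0) +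
    valRep nbr q.1 q.2 p.1 + valRep nbr p.1 p.2 q.1 + (fA p.1 : ℝ) + (fB q.1 : ℝ)

theorem stmt_11 {V : Type*} [Fintype V] [DecidableEq V]
    (G : SimpleGraph V) [DecidableRel G.Adj]
    (nbr : Fin 4 → V → V)
    (hnbr_distinct : ∀ v, Function.Injective fun i : Fin 4 => nbr i v)
    (hnbr_adj : ∀ v u, G.Adj v u ↔ ∃ i : Fin 4, u = nbr i v)
    (W : ℕ) (hW : 1 ≤ W)
    (fA fB : V → ℕ)
    (hfA : ∀ v, fA v ∈ Finset.Icc 1 W) (hfB : ∀ v, fB v ∈ Finset.Icc 1 W) :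
    IsExactPotential2 (gameUA G nbr W fA) (gameUB G nbr W fB)
      (gamePhi G nbr W fA fB) := by
  constructor <;> intros <;> simp only [gameUA, gameUB, gamePhi] <;> ring
end

section
/- Let N ≥ 1 and let x, y : {1,…,N}×{1,…,N} → {0,2}. Consider the two-player game in which both players' action set is {1,…,2N}; for an action a write i(a) = ⌈a/2⌉ ∈ {1,…,N} and r(a) = a − 2(i(a)−1) ∈ {1,2}; define the 2×2 gadget payoffs g₁(r,s;x) = 2 if (r,s)=(1,1), 1 if (r,s)=(1,2), 1 if (r,s)=(2,1), x if (r,s)=(2,2), and g₂(r,s;y) = 1 if (r,s)=(1,1), 2 if (r,s)=(1,2), y if (r,s)=(2,1), 1 if (r,s)=(2,2); the utilities are u₁(a,b) = g₁(r(a),r(b); x_{i(a),i(b)}) + 3·i(a) and u₂(a,b) = g₂(r(a),r(b); y_{i(a),i(b)}) + 3·i(b). Then this game has a better-reply cycle if and only if there exist i, j ∈ {1,…,N} with x_{i,j} = 2 and y_{i,j} = 2. -/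
/-- The game with players `P`, action sets `C p`, and utilities `u` has a better-reply
cycle: a sequence of profiles `a 0, a 1, …, a K` with `K ≥ 1` and `a K = a 0`, each
obtained from the previous one by changing the action of exactly one player, whose
utility strictly increases. -/
def HasBetterReplyCycle {P : Type*} {C : P → Type*}
    (u : ∀ _ : P, (∀ q, C q) → ℝ) : Prop :=
  ∃ (K : ℕ) (a : ℕ → ∀ q, C q), 1 ≤ K ∧ a K = a 0 ∧
    ∀ t < K, ∃ p : P, a (t + 1) p ≠ a t p ∧ (∀ q, q ≠ p → a (t + 1) q = a t q) ∧
      u p (a t) < u p (a (t + 1))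

/-- Both players' action set `{1,…,2N}`. -/
def Act14 (N : ℕ) : Type := {a : ℕ // a ∈ Finset.Icc 1 (2 * N)}

/-- `i(a) = ⌈a/2⌉`. -/
def blockIdx (a : ℕ) : ℕ := (a + 1) / 2

/-- `r(a) = a - 2(i(a) - 1) ∈ {1,2}`. -/
def inBlockIdx (a : ℕ) : ℕ := a - 2 * (blockIdx a - 1)

/-- The `2×2` gadget payoff of player 1: `g₁(1,1) = 2`, `g₁(1,2) = 1`, `g₁(2,1) = 1`,
`g₁(2,2) = x`. -/
noncomputable def gadget1 (r s : ℕ) (x : ℝ) : ℝ :=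
  if r = 1 ∧ s = 1 then 2 else if r = 1 ∧ s = 2 then 1
  else if r = 2 ∧ s = 1 then 1 else x

/-- The `2×2` gadget payoff of player 2: `g₂(1,1) = 1`, `g₂(1,2) = 2`, `g₂(2,1) = y`,
`g₂(2,2) = 1`. -/
noncomputable def gadget2 (r s : ℕ) (y : ℝ) : ℝ :=
  if r = 1 ∧ s = 1 then 1 else if r = 1 ∧ s = 2 then 2
  else if r = 2 ∧ s = 1 then y else 1

/-- The two-player game: `u₁(a,b) = g₁(r(a), r(b); x_{i(a),i(b)}) + 3 i(a)` and
`u₂(a,b) = g₂(r(a), r(b); y_{i(a),i(b)}) + 3 i(b)`. -/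
noncomputable def game14 (N : ℕ) (x y : ℕ → ℕ → ℝ) :
    ∀ _ : Fin 2, (∀ _ : Fin 2, Act14 N) → ℝ :=
  fun p σ =>
    if p = 0 then
      gadget1 (inBlockIdx (σ 0).1) (inBlockIdx (σ 1).1)
        (x (blockIdx (σ 0).1) (blockIdx (σ 1).1)) + 3 * (blockIdx (σ 0).1 : ℝ)
    else
      gadget2 (inBlockIdx (σ 0).1) (inBlockIdx (σ 1).1)
        (y (blockIdx (σ 0).1) (blockIdx (σ 1).1)) + 3 * (blockIdx (σ 1).1 : ℝ)

/-!
A player's utility is three times his own block index plus a gadget payoff in `[0, 2]`, so an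
improving move never lowers the mover's block index, and a move that keeps it is an
improvement inside the `2 × 2` gadget of the current block pair. The gadget with parameters
`x, y` has the improvement cycle `(1,1) → (1,2) → (2,2) → (2,1) → (1,1)` when `1 < x` and
`1 < y`, and an ordinal potential otherwise. Ordering profiles lexicographically by the sum
of the block indices and then by the potential of the current gadget, every improving move
goes up, so there is no cycle unless some gadget has `1 < x` and `1 < y`.
-/

def BetterReplyStep {P : Type*} {C : P → Type*} (u : ∀ _ : P, (∀ q, C q) → ℝ)
    (σ τ : ∀ q, C q) : Prop :=
  ∃ p, τ p ≠ σ p ∧ (∀ q, q ≠ p → τ q = σ q) ∧ u p σ < u p τ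

section Cycles

variable {P : Type*} {C : P → Type*} {u : ∀ _ : P, (∀ q, C q) → ℝ}

theorem not_hasBetterReplyCycle_of_potential {α : Type*} [Preorder α] (Φ : (∀ q, C q) → α)
    (hΦ : ∀ σ τ, BetterReplyStep u σ τ → Φ σ < Φ τ) : ¬ HasBetterReplyCycle u := by
  rintro ⟨K, a, hK, hcyc, hstep⟩
  have hlt : ∀ t, 1 ≤ t → t ≤ K → Φ (a 0) < Φ (a t) := by
    intro t ht
    induction t, ht using Nat.le_induction with
    | base => exact fun hK => hΦ _ _ (hstep 0 hK)
    | succ t ht ih => exact fun htK => (ih (by omega)).trans (hΦ _ _ (hstep t htK))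
  exact lt_irrefl _ (hcyc ▸ hlt K hK le_rfl)

theorem hasBetterReplyCycle_of_fin_cycle {n : ℕ} (c : Fin (n + 1) → ∀ q, C q)
    (h : ∀ i, BetterReplyStep u (c i) (c (i + 1))) : HasBetterReplyCycle u := by
  refine ⟨n + 1, fun t => c (Fin.ofNat (n + 1) t), by omega, by simp, fun t _ => ?_⟩
  have hsucc : Fin.ofNat (n + 1) (t + 1) = Fin.ofNat (n + 1) t + 1 := by
    ext
    simp [Fin.val_add]
  change BetterReplyStep u (c _) (c _)
  rw [hsucc]
  exact h _

end Cycles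

section TwoPlayer

variable {C : Fin 2 → Type*} {u : ∀ _ : Fin 2, (∀ q, C q) → ℝ}

theorem BetterReplyStep.fst_or_snd {σ τ : ∀ q, C q} (h : BetterReplyStep u σ τ) :
    (τ 1 = σ 1 ∧ u 0 σ < u 0 τ) ∨ (τ 0 = σ 0 ∧ u 1 σ < u 1 τ) := by
  obtain ⟨p, -, hfix, hlt⟩ := h
  fin_cases p
  · exact Or.inl ⟨hfix 1 (by decide), hlt⟩
  · exact Or.inr ⟨hfix 0 (by decide), hlt⟩

variable {A : Type*} {v : Fin 2 → (Fin 2 → A) → ℝ}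

theorem betterReplyStep_fst {a a' b : A} (ha : a' ≠ a) (h : v 0 ![a, b] < v 0 ![a', b]) :
    BetterReplyStep v ![a, b] ![a', b] :=
  ⟨0, ha, fun q hq => by fin_cases q <;> simp_all, h⟩

theorem betterReplyStep_snd {a b b' : A} (hb : b' ≠ b) (h : v 1 ![a, b] < v 1 ![a, b']) :
    BetterReplyStep v ![a, b] ![a, b'] :=
  ⟨1, hb, fun q hq => by fin_cases q <;> simp_all, h⟩

end TwoPlayer

section Gadget

lemma gadget1_mem_Icc (r s : ℕ) {x : ℝ} (hx : x ∈ Set.Icc 0 2) :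
    gadget1 r s x ∈ Set.Icc 0 2 := by
  unfold gadget1
  split_ifs <;> norm_num [hx]

lemma gadget2_mem_Icc (r s : ℕ) {y : ℝ} (hy : y ∈ Set.Icc 0 2) :
    gadget2 r s y ∈ Set.Icc 0 2 := by
  unfold gadget2
  split_ifs <;> norm_num [hy]

noncomputable def gadgetPotential (x y : ℝ) (r s : ℕ) : ℕ :=
  if r = 1 then (if s = 1 then 2 else 3)
  else if s = 1 then (if 1 < y then 1 else 0)
  else if 1 < x then 4 else if 1 < y then 0 else 1

lemma gadgetPotential_le_four (x y : ℝ) (r s : ℕ) : gadgetPotential x y r s ≤ 4 := by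
  unfold gadgetPotential
  split_ifs <;> norm_num

variable {x y : ℝ} {r r' s s' : ℕ}

lemma gadgetPotential_lt_of_gadget1_lt
    (hr : r = 1 ∨ r = 2) (hr' : r' = 1 ∨ r' = 2) (hs : s = 1 ∨ s = 2)
    (h : gadget1 r s x < gadget1 r' s x) :
    gadgetPotential x y r s < gadgetPotential x y r' s := by
  rcases hr with rfl | rfl <;> rcases hr' with rfl | rfl <;> rcases hs with rfl | rfl <;>
    simp only [gadget1, gadgetPotential] at h ⊢ <;> split_ifs at h ⊢ <;>
    first | omega | linarith

lemma gadgetPotential_lt_of_gadget2_lt (hxy : ¬(1 < x ∧ 1 < y))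
    (hr : r = 1 ∨ r = 2) (hs : s = 1 ∨ s = 2) (hs' : s' = 1 ∨ s' = 2)
    (h : gadget2 r s y < gadget2 r s' y) :
    gadgetPotential x y r s < gadgetPotential x y r s' := by
  rcases hr with rfl | rfl <;> rcases hs with rfl | rfl <;> rcases hs' with rfl | rfl <;>
    simp only [gadget2, gadgetPotential] at h ⊢ <;> split_ifs at h ⊢ <;>
    first | omega | linarith | tauto

end Gadget

lemma le_of_add_three_mul_lt {g g' : ℝ} {i i' : ℕ} (hg : 0 ≤ g) (hg' : g' ≤ 2)
    (h : g + 3 * i < g' + 3 * i') : i ≤ i' := by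
  by_contra hlt
  have : (i' : ℝ) + 1 ≤ i := by exact_mod_cast Nat.not_le.mp hlt
  linarith

section Game14

variable {N : ℕ} {x y : ℕ → ℕ → ℝ}

lemma blockIdx_mem_Icc (a : Act14 N) : blockIdx a.1 ∈ Finset.Icc 1 N := by
  have := Finset.mem_Icc.mp a.2
  simp only [Finset.mem_Icc, blockIdx]
  omega

lemma inBlockIdx_eq_one_or_two (a : Act14 N) : inBlockIdx a.1 = 1 ∨ inBlockIdx a.1 = 2 := by
  have := Finset.mem_Icc.mp a.2
  simp only [inBlockIdx, blockIdx]
  omega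

@[simp]
lemma blockIdx_two_mul_sub_one {i : ℕ} (hi : 1 ≤ i) : blockIdx (2 * i - 1) = i := by
  unfold blockIdx; omega

@[simp]
lemma blockIdx_two_mul (i : ℕ) : blockIdx (2 * i) = i := by
  unfold blockIdx; omega

@[simp]
lemma inBlockIdx_two_mul_sub_one {i : ℕ} (hi : 1 ≤ i) : inBlockIdx (2 * i - 1) = 1 := by
  unfold inBlockIdx blockIdx; omega

@[simp]
lemma inBlockIdx_two_mul {i : ℕ} (hi : 1 ≤ i) : inBlockIdx (2 * i) = 2 := by
  unfold inBlockIdx blockIdx; omega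

lemma game14_zero (σ : ∀ _ : Fin 2, Act14 N) :
    game14 N x y 0 σ = gadget1 (inBlockIdx (σ 0).1) (inBlockIdx (σ 1).1)
      (x (blockIdx (σ 0).1) (blockIdx (σ 1).1)) + 3 * (blockIdx (σ 0).1 : ℝ) := rfl

lemma game14_one (σ : ∀ _ : Fin 2, Act14 N) :
    game14 N x y 1 σ = gadget2 (inBlockIdx (σ 0).1) (inBlockIdx (σ 1).1)
      (y (blockIdx (σ 0).1) (blockIdx (σ 1).1)) + 3 * (blockIdx (σ 1).1 : ℝ) := rfl

-- Lexicographic, since `gadgetPotential ≤ 4 < 5`.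
noncomputable def game14Potential (N : ℕ) (x y : ℕ → ℕ → ℝ)
    (σ : ∀ _ : Fin 2, Act14 N) : ℕ :=
  5 * (blockIdx (σ 0).1 + blockIdx (σ 1).1) +
    gadgetPotential (x (blockIdx (σ 0).1) (blockIdx (σ 1).1))
      (y (blockIdx (σ 0).1) (blockIdx (σ 1).1)) (inBlockIdx (σ 0).1) (inBlockIdx (σ 1).1)

lemma game14Potential_lt_of_fst
    (hx : ∀ i ∈ Finset.Icc 1 N, ∀ j ∈ Finset.Icc 1 N, x i j ∈ Set.Icc 0 2)
    {σ τ : ∀ _ : Fin 2, Act14 N} (h1 : τ 1 = σ 1)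
    (hu : game14 N x y 0 σ < game14 N x y 0 τ) :
    game14Potential N x y σ < game14Potential N x y τ := by
  rw [game14_zero, game14_zero, h1] at hu
  rw [game14Potential, game14Potential, h1]
  have hgσ := gadget1_mem_Icc (inBlockIdx (σ 0).1) (inBlockIdx (σ 1).1)
    (hx _ (blockIdx_mem_Icc (σ 0)) _ (blockIdx_mem_Icc (σ 1)))
  have hgτ := gadget1_mem_Icc (inBlockIdx (τ 0).1) (inBlockIdx (σ 1).1)
    (hx _ (blockIdx_mem_Icc (τ 0)) _ (blockIdx_mem_Icc (σ 1)))
  obtain hlt | heq := (le_of_add_three_mul_lt hgσ.1 hgτ.2 hu).lt_or_eq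
  · have := gadgetPotential_le_four (x (blockIdx (σ 0).1) (blockIdx (σ 1).1))
      (y (blockIdx (σ 0).1) (blockIdx (σ 1).1)) (inBlockIdx (σ 0).1) (inBlockIdx (σ 1).1)
    omega
  · rw [← heq] at hu ⊢
    have := gadgetPotential_lt_of_gadget1_lt (y := y (blockIdx (σ 0).1) (blockIdx (σ 1).1))
      (inBlockIdx_eq_one_or_two (σ 0)) (inBlockIdx_eq_one_or_two (τ 0))
      (inBlockIdx_eq_one_or_two (σ 1)) (by linarith)
    omega

lemma game14Potential_lt_of_snd
    (hy : ∀ i ∈ Finset.Icc 1 N, ∀ j ∈ Finset.Icc 1 N, y i j ∈ Set.Icc 0 2)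
    (hxy : ∀ i ∈ Finset.Icc 1 N, ∀ j ∈ Finset.Icc 1 N, ¬(1 < x i j ∧ 1 < y i j))
    {σ τ : ∀ _ : Fin 2, Act14 N} (h0 : τ 0 = σ 0)
    (hu : game14 N x y 1 σ < game14 N x y 1 τ) :
    game14Potential N x y σ < game14Potential N x y τ := by
  rw [game14_one, game14_one, h0] at hu
  rw [game14Potential, game14Potential, h0]
  have hgσ := gadget2_mem_Icc (inBlockIdx (σ 0).1) (inBlockIdx (σ 1).1)
    (hy _ (blockIdx_mem_Icc (σ 0)) _ (blockIdx_mem_Icc (σ 1)))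
  have hgτ := gadget2_mem_Icc (inBlockIdx (σ 0).1) (inBlockIdx (τ 1).1)
    (hy _ (blockIdx_mem_Icc (σ 0)) _ (blockIdx_mem_Icc (τ 1)))
  obtain hlt | heq := (le_of_add_three_mul_lt hgσ.1 hgτ.2 hu).lt_or_eq
  · have := gadgetPotential_le_four (x (blockIdx (σ 0).1) (blockIdx (σ 1).1))
      (y (blockIdx (σ 0).1) (blockIdx (σ 1).1)) (inBlockIdx (σ 0).1) (inBlockIdx (σ 1).1)
    omega
  · rw [← heq] at hu ⊢
    have := gadgetPotential_lt_of_gadget2_lt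
      (hxy _ (blockIdx_mem_Icc (σ 0)) _ (blockIdx_mem_Icc (σ 1)))
      (inBlockIdx_eq_one_or_two (σ 0)) (inBlockIdx_eq_one_or_two (σ 1))
      (inBlockIdx_eq_one_or_two (τ 1)) (by linarith)
    omega

theorem not_hasBetterReplyCycle_game14
    (hx : ∀ i ∈ Finset.Icc 1 N, ∀ j ∈ Finset.Icc 1 N, x i j ∈ Set.Icc 0 2)
    (hy : ∀ i ∈ Finset.Icc 1 N, ∀ j ∈ Finset.Icc 1 N, y i j ∈ Set.Icc 0 2)
    (hxy : ∀ i ∈ Finset.Icc 1 N, ∀ j ∈ Finset.Icc 1 N, ¬(1 < x i j ∧ 1 < y i j)) :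
    ¬ HasBetterReplyCycle (game14 N x y) :=
  not_hasBetterReplyCycle_of_potential (game14Potential N x y) fun _ _ h =>
    h.fst_or_snd.elim (fun ⟨h1, hu⟩ => game14Potential_lt_of_fst hx h1 hu)
      (fun ⟨h0, hu⟩ => game14Potential_lt_of_snd hy hxy h0 hu)

theorem hasBetterReplyCycle_game14 {i j : ℕ} (hi : i ∈ Finset.Icc 1 N)
    (hj : j ∈ Finset.Icc 1 N) (hx : 1 < x i j) (hy : 1 < y i j) :
    HasBetterReplyCycle (game14 N x y) := by
  obtain ⟨hi1, hiN⟩ := Finset.mem_Icc.mp hi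
  obtain ⟨hj1, hjN⟩ := Finset.mem_Icc.mp hj
  let a₁ : Act14 N := ⟨2 * i - 1, Finset.mem_Icc.mpr (by omega)⟩
  let a₂ : Act14 N := ⟨2 * i, Finset.mem_Icc.mpr (by omega)⟩
  let b₁ : Act14 N := ⟨2 * j - 1, Finset.mem_Icc.mpr (by omega)⟩
  let b₂ : Act14 N := ⟨2 * j, Finset.mem_Icc.mpr (by omega)⟩
  have ha : a₂ ≠ a₁ := fun h => by
    have := congrArg Subtype.val h; simp [a₁, a₂] at this; omega
  have hb : b₂ ≠ b₁ := fun h => by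
    have := congrArg Subtype.val h; simp [b₁, b₂] at this; omega
  refine hasBetterReplyCycle_of_fin_cycle
    ![![a₁, b₁], ![a₁, b₂], ![a₂, b₂], ![a₂, b₁]] fun k => ?_
  fin_cases k
  · exact betterReplyStep_snd hb (by simp [game14, gadget2, a₁, b₁, b₂, hi1, hj1])
  · exact betterReplyStep_fst ha (by simp [game14, gadget1, a₁, a₂, b₂, hi1, hj1, hx])
  · exact betterReplyStep_snd hb.symm (by simp [game14, gadget2, a₂, b₁, b₂, hi1, hj1, hy])
  · exact betterReplyStep_fst ha.symm (by simp [game14, gadget1, a₁, a₂, b₁, hi1, hj1])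

end Game14

theorem stmt_14_general (N : ℕ) (x y : ℕ → ℕ → ℝ)
    (hx : ∀ i ∈ Finset.Icc 1 N, ∀ j ∈ Finset.Icc 1 N, x i j = 0 ∨ x i j = 2)
    (hy : ∀ i ∈ Finset.Icc 1 N, ∀ j ∈ Finset.Icc 1 N, y i j = 0 ∨ y i j = 2) :
    HasBetterReplyCycle (game14 N x y) ↔
      ∃ i ∈ Finset.Icc 1 N, ∃ j ∈ Finset.Icc 1 N, x i j = 2 ∧ y i j = 2 := by
  have mem_Icc {z : ℝ} (hz : z = 0 ∨ z = 2) : z ∈ Set.Icc 0 2 := by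
    rcases hz with rfl | rfl <;> norm_num
  have eq_two {z : ℝ} (hz : z = 0 ∨ z = 2) (h : 1 < z) : z = 2 :=
    hz.resolve_left (by rintro rfl; norm_num at h)
  constructor
  · intro hcycle
    by_contra! hno
    exact not_hasBetterReplyCycle_game14 (fun i hi j hj => mem_Icc (hx i hi j hj))
      (fun i hi j hj => mem_Icc (hy i hi j hj))
      (fun i hi j hj ⟨hxij, hyij⟩ =>
        hno i hi j hj (eq_two (hx i hi j hj) hxij) (eq_two (hy i hi j hj) hyij)) hcycle
  · rintro ⟨i, hi, j, hj, hxij, hyij⟩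
    exact hasBetterReplyCycle_game14 hi hj (by norm_num [hxij]) (by norm_num [hyij])

theorem stmt_14 (N : ℕ) (hN : 1 ≤ N) (x y : ℕ → ℕ → ℝ)
    (hx : ∀ i ∈ Finset.Icc 1 N, ∀ j ∈ Finset.Icc 1 N, x i j = 0 ∨ x i j = 2)
    (hy : ∀ i ∈ Finset.Icc 1 N, ∀ j ∈ Finset.Icc 1 N, y i j = 0 ∨ y i j = 2) :
    HasBetterReplyCycle (game14 N x y) ↔
      ∃ i ∈ Finset.Icc 1 N, ∃ j ∈ Finset.Icc 1 N, x i j = 2 ∧ y i j = 2 :=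
  stmt_14_general N x y hx hy
end
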